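/- arXiv:1906.03615 — 10 statements merged into one kernel-verified Lean document; each statement's English description precedes it below -/
import Mathlib

section
/- Let g be a unitary automorphism of (V,h). If the only g-stable isotropic subspace of V is the zero subspace, then g is a semisimple endomorphism of V (equivalently, every g-stable K-subspace of V admits a g-stable K-subspace complement). -/
/-!
For a `g`-stable subspace `W`, the orthogonal `W^⊥ = {x | ∀ w ∈ W, h w x = 0}` is again
`g`-stable, since `g` is unitary and `g W = W`. Hence `W ⊓ W^⊥` is a `g`-stable isotropic
subspace, so it is zero by hypothesis. As `W^⊥` is cut out by at most `dim W` linear equations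
(the functionals `h w ·` for `w` in a basis of `W`, which span all `h w ·` with `w ∈ W` because
`h` is semilinear in its first argument), `dim W + dim W^⊥ ≥ dim V`, so `W^⊥` is a `g`-stable
complement of `W`.
-/

open Module Submodule

section RightOrthogonal

variable {K V : Type*} [Field K] [AddCommGroup V] [Module K V]

/-- `B w` stands for the functional `h w ·` of a sesquilinear form `h`. -/
def rightOrthogonal (B : V → Dual K V) (S : Submodule K V) : Submodule K V :=
  (span K (B '' S)).dualCoannihilator

lemma mem_rightOrthogonal {B : V → Dual K V} {S : Submodule K V} {x : V} :
    x ∈ rightOrthogonal B S ↔ ∀ w ∈ S, B w x = 0 := by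
  rw [← SetLike.mem_coe, rightOrthogonal, coe_dualCoannihilator_span]
  simp

section Semilinear

variable [FiniteDimensional K V] {B : V → Dual K V} {σ : K → K}

lemma finrank_span_image_le (hadd : ∀ x y, B (x + y) = B x + B y)
    (hsmul : ∀ (c : K) x, B (c • x) = σ c • B x) (S : Submodule K V) :
    finrank K (span K (B '' S)) ≤ finrank K S := by
  let b := finBasis K S
  let Badd : V →+ Dual K V := AddMonoidHom.mk' B hadd
  have hspan : span K (B '' S) ≤ span K (Set.range fun i => B (b i)) := by
    refine span_le.mpr ?_
    rintro _ ⟨w, hw, rfl⟩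
    have hBw : B w = ∑ i, σ (b.repr ⟨w, hw⟩ i) • B (b i) := by
      have hw_sum := congrArg Subtype.val (b.sum_repr ⟨w, hw⟩)
      simp only [coe_sum, coe_smul] at hw_sum
      conv_lhs => rw [← hw_sum]
      exact (map_sum Badd _ _).trans (Finset.sum_congr rfl fun i _ => hsmul _ _)
    rw [SetLike.mem_coe, hBw]
    exact sum_mem fun i _ => smul_mem _ _ (subset_span ⟨i, rfl⟩)
  calc finrank K (span K (B '' S))
      ≤ finrank K (span K (Set.range fun i => B (b i))) := finrank_mono hspan
    _ ≤ Fintype.card (Fin (finrank K S)) := finrank_range_le_card _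
    _ = finrank K S := Fintype.card_fin _

lemma finrank_le_finrank_add_finrank_rightOrthogonal (hadd : ∀ x y, B (x + y) = B x + B y)
    (hsmul : ∀ (c : K) x, B (c • x) = σ c • B x) (S : Submodule K V) :
    finrank K V ≤ finrank K S + finrank K (rightOrthogonal B S) := by
  have := Subspace.finrank_add_finrank_dualCoannihilator_eq (span K (B '' S))
  have := finrank_span_image_le hadd hsmul S
  rw [rightOrthogonal]
  omega

end Semilinear

lemma map_eq_of_forall_mem [FiniteDimensional K V] (g : V ≃ₗ[K] V) {S : Submodule K V}
    (hS : ∀ w ∈ S, g w ∈ S) : S.map (g : V →ₗ[K] V) = S :=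
  eq_of_le_of_finrank_le (by rintro _ ⟨w, hw, rfl⟩; exact hS w hw)
    (LinearEquiv.finrank_map_eq g S).ge

lemma rightOrthogonal_stable [FiniteDimensional K V] {B : V → Dual K V} (g : V ≃ₗ[K] V)
    (hg : ∀ x y, B (g x) (g y) = B x y) {S : Submodule K V} (hS : ∀ w ∈ S, g w ∈ S) :
    ∀ x ∈ rightOrthogonal B S, g x ∈ rightOrthogonal B S := by
  intro x hx
  rw [mem_rightOrthogonal] at hx ⊢
  intro w hw
  rw [← map_eq_of_forall_mem g hS] at hw
  obtain ⟨w', hw', rfl⟩ := hw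
  exact (hg w' x).trans (hx w' hw')

end RightOrthogonal

theorem unitary_no_isotropic_semisimple_general
    (q : ℕ)
    (K : Type*) [Field K]
    (V : Type*) [AddCommGroup V] [Module K V] [FiniteDimensional K V]
    (h : V → V → K)
    (h_add_left : ∀ x x' y : V, h (x + x') y = h x y + h x' y)
    (h_add_right : ∀ x y y' : V, h x (y + y') = h x y + h x y')
    (h_smul_left : ∀ (c : K) (x y : V), h (c • x) y = c ^ q * h x y)
    (h_smul_right : ∀ (c : K) (x y : V), h x (c • y) = c * h x y)
    (g : V ≃ₗ[K] V)
    (hg : ∀ x y : V, h (g x) (g y) = h x y)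
    (hiso : ∀ W : Submodule K V, (∀ w ∈ W, g w ∈ W) →
      (∀ w ∈ W, ∀ w' ∈ W, h w w' = 0) → W = ⊥) :
    ∀ W : Submodule K V, (∀ w ∈ W, g w ∈ W) →
      ∃ W' : Submodule K V, (∀ w ∈ W', g w ∈ W') ∧ IsCompl W W' := by
  intro W hW
  let B : V → Dual K V := fun w => ⟨⟨h w, h_add_right w⟩, fun c y => h_smul_right c w y⟩
  have hB_add : ∀ x y, B (x + y) = B x + B y := fun x y => LinearMap.ext (h_add_left x y)
  have hB_smul : ∀ (c : K) x, B (c • x) = c ^ q • B x := fun c x => LinearMap.ext (h_smul_left c x)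
  have hW' := rightOrthogonal_stable (B := B) g hg hW
  refine ⟨rightOrthogonal B W, hW', (isCompl_iff_disjoint _ _
    (finrank_le_finrank_add_finrank_rightOrthogonal hB_add hB_smul W)).mpr ?_⟩
  refine disjoint_iff.mpr (hiso _ (fun w hw => ⟨hW w hw.1, hW' w hw.2⟩) ?_)
  exact fun w hw w' hw' => mem_rightOrthogonal.mp hw'.2 w hw.1

/-- If a unitary automorphism `g` of a nondegenerate hermitian space `(V, h)` over a finite
field `K` with `q ^ 2` elements stabilizes no nonzero isotropic subspace, then `g` is
semisimple: every `g`-stable subspace admits a `g`-stable complement. -/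
theorem unitary_no_isotropic_semisimple
    (q : ℕ) (hq : IsPrimePow q)
    (K : Type*) [Field K] [Fintype K] (hK : Fintype.card K = q ^ 2)
    (V : Type*) [AddCommGroup V] [Module K V] [FiniteDimensional K V] [Nontrivial V]
    (h : V → V → K)
    (h_add_left : ∀ x x' y : V, h (x + x') y = h x y + h x' y)
    (h_add_right : ∀ x y y' : V, h x (y + y') = h x y + h x y')
    (h_smul_left : ∀ (c : K) (x y : V), h (c • x) y = c ^ q * h x y)
    (h_smul_right : ∀ (c : K) (x y : V), h x (c • y) = c * h x y)
    (h_symm : ∀ x y : V, h y x = (h x y) ^ q)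
    (h_nondeg : ∀ x : V, (∀ y : V, h x y = 0) → x = 0)
    (g : V ≃ₗ[K] V)
    (hg : ∀ x y : V, h (g x) (g y) = h x y)
    (hiso : ∀ W : Submodule K V, (∀ w ∈ W, g w ∈ W) →
      (∀ w ∈ W, ∀ w' ∈ W, h w w' = 0) → W = ⊥) :
    ∀ W : Submodule K V, (∀ w ∈ W, g w ∈ W) →
      ∃ W' : Submodule K V, (∀ w ∈ W', g w ∈ W') ∧ IsCompl W W' :=
  unitary_no_isotropic_semisimple_general q K V h h_add_left h_add_right h_smul_left h_smul_right g
    hg hiso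
end

section
/- Let s be a unitary automorphism of (V,h). Assume that the only s-stable isotropic subspace of V is the zero subspace, and that there is no orthogonal decomposition V = V₁ ⊕ V₂ with V₁ and V₂ both nonzero s-stable subspaces. Then the K-subalgebra K[s] of End_K(V) generated by s is a field. -/
/-! The adjoint with respect to `h` preserves `K[s]`, because `s⁻¹`, the adjoint of `s`, is a
power of `s`; so `K[s]` is a finite commutative ring closed under adjoints. If `b` is an adjoint
of `a` and `b * a = 0`, the range of `a` is an `s`-stable isotropic subspace, hence `a = 0`.
Applied to `b * a` this shows that `K[s]` is reduced. For an idempotent `e` with adjoint `b`, the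
product `b * e` is a self-adjoint idempotent, so its range and kernel form an orthogonal
`s`-stable decomposition; hence `b * e` is `0` or `1`, and so is `e`. Finally, a finite reduced
commutative ring with no idempotents other than `0` and `1` is a field, since every element has
an idempotent power. -/

theorem exists_isIdempotentElem_pow {M : Type*} [Monoid M] [Finite M] (a : M) :
    ∃ n, 0 < n ∧ IsIdempotentElem (a ^ n) := by
  obtain ⟨i, j, hij, hpow⟩ := Finite.exists_ne_map_eq_of_infinite (a ^ · : ℕ → M)
  wlog hlt : i < j generalizing i j
  · exact this j i hij.symm hpow.symm (by omega)
  have hper : Function.Periodic (fun k => a ^ (i + k)) (j - i) := fun k => by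
    simp only [show i + (k + (j - i)) = k + j by omega, pow_add, ← hpow, add_comm i k]
  set n := (i + 1) * (j - i)
  have hin : i < n := Nat.lt_of_lt_of_le i.lt_succ_self (Nat.le_mul_of_pos_right _ (by omega))
  refine ⟨n, by omega, ?_⟩
  have hrepeat : a ^ (i + (n - i + n)) = a ^ (i + (n - i)) := hper.nat_mul (i + 1) (n - i)
  rwa [← Nat.add_assoc, Nat.add_sub_cancel' hin.le, pow_add] at hrepeat

theorem isField_of_finite_of_isReduced {R : Type*} [CommRing R] [Finite R] [Nontrivial R]
    [IsReduced R] (hR : ∀ e : R, IsIdempotentElem e → e = 0 ∨ e = 1) : IsField R := by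
  refine ⟨exists_pair_ne R, mul_comm, fun {a} ha => ?_⟩
  obtain ⟨n, hn, he⟩ := exists_isIdempotentElem_pow a
  rcases hR _ he with h0 | h1
  · exact absurd (IsNilpotent.eq_zero ⟨n, h0⟩) ha
  · exact ⟨a ^ (n - 1), by rw [← pow_succ', Nat.sub_add_cancel hn, h1]⟩

theorem Units.inv_mem_adjoin {K E : Type*} [CommSemiring K] [Semiring E] [Algebra K E] [Finite E]
    (u : Eˣ) : ↑u⁻¹ ∈ Algebra.adjoin K {(u : E)} := by
  obtain ⟨n, hn, hun⟩ := (isOfFinOrder_of_finite u).exists_pow_eq_one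
  have : u⁻¹ = u ^ (n - 1) :=
    inv_eq_of_mul_eq_one_right (by rw [← pow_succ', Nat.sub_add_cancel hn, hun])
  rw [this, Units.val_pow_eq_pow_val]
  exact pow_mem (Algebra.self_mem_adjoin_singleton K _) _

section Form

variable {K V : Type*} [Field K] [AddCommGroup V] [Module K V]

-- Forms are only bundled as biadditive maps: the twist `c ↦ c ^ q` enters through hypotheses,
-- so it need not be known to be a ring hom.
def IsAdjointPair (H : V →+ V →+ K) (a b : Module.End K V) : Prop :=
  ∀ x y, H (a x) y = H x (b y)

def IsIsotropic (H : V →+ V →+ K) (W : Submodule K V) : Prop :=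
  ∀ x ∈ W, ∀ y ∈ W, H x y = 0

def IsOrtho (H : V →+ V →+ K) (V₁ V₂ : Submodule K V) : Prop :=
  ∀ x ∈ V₁, ∀ y ∈ V₂, H x y = 0

variable {H : V →+ V →+ K} {a b c d s : Module.End K V}

theorem isAdjointPair_algebraMap {σ : K → K}
    (h_smul_left : ∀ (c : K) (x y : V), H (c • x) y = σ c * H x y)
    (h_smul_right : ∀ (c : K) (x y : V), H x (c • y) = c * H x y) (r : K) :
    IsAdjointPair H (algebraMap K _ r) (algebraMap K _ (σ r)) := fun x y => by
  rw [Module.algebraMap_end_apply, Module.algebraMap_end_apply, h_smul_left, h_smul_right]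

theorem LinearEquiv.isAdjointPair_symm (e : V ≃ₗ[K] V) (he : ∀ x y, H (e x) (e y) = H x y) :
    IsAdjointPair H e e.symm := fun x y => by
  rw [LinearEquiv.coe_coe, LinearEquiv.coe_coe, ← he x (e.symm y), e.apply_symm_apply]

namespace IsAdjointPair

theorem add (hab : IsAdjointPair H a b) (hcd : IsAdjointPair H c d) :
    IsAdjointPair H (a + c) (b + d) := fun x y => by
  simp only [LinearMap.add_apply, map_add, AddMonoidHom.add_apply, hab x y, hcd x y]

theorem mul (hab : IsAdjointPair H a b) (hcd : IsAdjointPair H c d) :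
    IsAdjointPair H (a * c) (d * b) := fun x y => by
  rw [Module.End.mul_apply, Module.End.mul_apply, hab, hcd]

theorem symm {σ : K → K} (hσ : Function.Involutive σ) (h_symm : ∀ x y, H y x = σ (H x y))
    (hab : IsAdjointPair H a b) : IsAdjointPair H b a := fun x y => by
  rw [h_symm, ← hab, h_symm, hσ]

theorem left_unique (h_nondeg : ∀ x, (∀ y, H x y = 0) → x = 0)
    (hab : IsAdjointPair H a b) (hcb : IsAdjointPair H c b) : a = c :=
  LinearMap.ext fun x => sub_eq_zero.1 <| h_nondeg _ fun y => by
    rw [map_sub, AddMonoidHom.sub_apply, hab, hcb, sub_self]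

end IsAdjointPair

theorem exists_isAdjointPair_mem_adjoin {σ : K → K}
    (h_smul_left : ∀ (c : K) (x y : V), H (c • x) y = σ c * H x y)
    (h_smul_right : ∀ (c : K) (x y : V), H x (c • y) = c * H x y)
    (hab : IsAdjointPair H a b) (hb : b ∈ Algebra.adjoin K {a}) (hc : c ∈ Algebra.adjoin K {a}) :
    ∃ d ∈ Algebra.adjoin K {a}, IsAdjointPair H c d := by
  induction hc using Algebra.adjoin_induction with
  | mem x hx => exact ⟨b, hb, Set.mem_singleton_iff.1 hx ▸ hab⟩
  | algebraMap r =>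
    exact ⟨_, Subalgebra.algebraMap_mem _ (σ r),
      isAdjointPair_algebraMap h_smul_left h_smul_right r⟩
  | add x y _ _ hx hy =>
    obtain ⟨dx, hdx, hx⟩ := hx
    obtain ⟨dy, hdy, hy⟩ := hy
    exact ⟨dx + dy, add_mem hdx hdy, hx.add hy⟩
  | mul x y _ _ hx hy =>
    obtain ⟨dx, hdx, hx⟩ := hx
    obtain ⟨dy, hdy, hy⟩ := hy
    exact ⟨dy * dx, mul_mem hdy hdx, hx.mul hy⟩

theorem IsAdjointPair.eq_zero_of_mul_eq_zero
    (hiso : ∀ W ∈ s.invtSubmodule, IsIsotropic H W → W = ⊥)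
    (hsa : Commute s a) (hab : IsAdjointPair H a b) (hba : b * a = 0) : a = 0 := by
  refine LinearMap.range_eq_bot.1 <| hiso _ ?_ ?_
  · rintro _ ⟨v, rfl⟩
    exact ⟨s v, (LinearMap.congr_fun hsa.eq v).symm⟩
  · rintro _ ⟨x, rfl⟩ _ ⟨y, rfl⟩
    rw [hab, ← Module.End.mul_apply, hba, LinearMap.zero_apply, map_zero]

theorem IsAdjointPair.eq_zero_of_mul_self_eq_zero
    (hiso : ∀ W ∈ s.invtSubmodule, IsIsotropic H W → W = ⊥)
    (hab : IsAdjointPair H a b) (hba : IsAdjointPair H b a) (hsa : Commute s a)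
    (hsb : Commute s b) (hcomm : Commute a b) (ha : a * a = 0) : a = 0 := by
  have hba0 : b * a = 0 := by
    refine (hba.mul hab).eq_zero_of_mul_eq_zero hiso (hsb.mul_right hsa) ?_
    rw [hcomm.mul_mul_mul_comm, ha, mul_zero]
  exact hab.eq_zero_of_mul_eq_zero hiso hsa hba0

theorem IsIdempotentElem.eq_zero_or_eq_one_of_isAdjointPair_self
    (hdec : ¬ ∃ V₁ V₂ : Submodule K V, V₁ ≠ ⊥ ∧ V₂ ≠ ⊥ ∧ V₁ ∈ s.invtSubmodule ∧
      V₂ ∈ s.invtSubmodule ∧ IsCompl V₁ V₂ ∧ IsOrtho H V₁ V₂)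
    (ha : IsIdempotentElem a) (haa : IsAdjointPair H a a) (hsa : Commute s a) :
    a = 0 ∨ a = 1 := by
  by_contra! hne
  obtain ⟨hrange, hker⟩ := (LinearMap.IsIdempotentElem.commute_iff ha).1 hsa.symm
  refine hdec ⟨LinearMap.range a, LinearMap.ker a, mt LinearMap.range_eq_bot.1 hne.1, ?_, hrange,
    hker, LinearMap.IsIdempotentElem.isCompl ha, ?_⟩
  · exact fun hk => hne.2 <| LinearMap.ext fun x =>
      LinearMap.ker_eq_bot.1 hk (LinearMap.congr_fun ha.eq x)
  · rintro _ ⟨x, rfl⟩ y hy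
    rw [haa, LinearMap.mem_ker.1 hy, map_zero]

theorem IsIdempotentElem.eq_zero_or_eq_one_of_isAdjointPair
    (h_nondeg : ∀ x, (∀ y, H x y = 0) → x = 0)
    (hiso : ∀ W ∈ s.invtSubmodule, IsIsotropic H W → W = ⊥)
    (hdec : ¬ ∃ V₁ V₂ : Submodule K V, V₁ ≠ ⊥ ∧ V₂ ≠ ⊥ ∧ V₁ ∈ s.invtSubmodule ∧
      V₂ ∈ s.invtSubmodule ∧ IsCompl V₁ V₂ ∧ IsOrtho H V₁ V₂)
    (ha : IsIdempotentElem a) (hab : IsAdjointPair H a b) (hba : IsAdjointPair H b a)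
    (hsa : Commute s a) (hsb : Commute s b) (hcomm : Commute a b) : a = 0 ∨ a = 1 := by
  have hb : IsIdempotentElem b := (ha.eq ▸ hba.mul hba).left_unique h_nondeg hba
  rcases (hb.mul_of_commute hcomm.symm ha).eq_zero_or_eq_one_of_isAdjointPair_self hdec
    (hba.mul hab) (hsb.mul_right hsa) with h0 | h1
  · exact Or.inl (hab.eq_zero_of_mul_eq_zero hiso hsa h0)
  · refine Or.inr ?_
    calc a = b * a * a := by rw [h1, one_mul]
      _ = 1 := by rw [mul_assoc, ha.eq, h1]

end Form

open scoped IsMulCommutative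

theorem adjoin_unitary_isField_general
    (q : ℕ)
    (K : Type*) [Field K] [Fintype K] (hK : Fintype.card K = q ^ 2)
    (V : Type*) [AddCommGroup V] [Module K V] [FiniteDimensional K V] [Nontrivial V]
    (h : V → V → K)
    (h_add_left : ∀ x x' y : V, h (x + x') y = h x y + h x' y)
    (h_add_right : ∀ x y y' : V, h x (y + y') = h x y + h x y')
    (h_smul_left : ∀ (c : K) (x y : V), h (c • x) y = c ^ q * h x y)
    (h_smul_right : ∀ (c : K) (x y : V), h x (c • y) = c * h x y)
    (h_symm : ∀ x y : V, h y x = (h x y) ^ q)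
    (h_nondeg : ∀ x : V, (∀ y : V, h x y = 0) → x = 0)
    (s : V ≃ₗ[K] V)
    (hs : ∀ x y : V, h (s x) (s y) = h x y)
    (hiso : ∀ W : Submodule K V, (∀ w ∈ W, s w ∈ W) →
      (∀ w ∈ W, ∀ w' ∈ W, h w w' = 0) → W = ⊥)
    (hdec : ¬ ∃ V₁ V₂ : Submodule K V, V₁ ≠ ⊥ ∧ V₂ ≠ ⊥ ∧
      (∀ v ∈ V₁, s v ∈ V₁) ∧ (∀ v ∈ V₂, s v ∈ V₂) ∧ IsCompl V₁ V₂ ∧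
      (∀ x ∈ V₁, ∀ y ∈ V₂, h x y = 0)) :
    IsField ↥(Algebra.adjoin K {s.toLinearMap}) := by
  let H : V →+ V →+ K :=
    .mk' (fun x => .mk' (h x) (h_add_right x)) fun x x' => AddMonoidHom.ext (h_add_left x x')
  have hiso' : ∀ W ∈ Module.End.invtSubmodule s, IsIsotropic H W → W = ⊥ := hiso
  have hdec' : ¬ ∃ V₁ V₂ : Submodule K V, V₁ ≠ ⊥ ∧ V₂ ≠ ⊥ ∧ V₁ ∈ Module.End.invtSubmodule s ∧
      V₂ ∈ Module.End.invtSubmodule s ∧ IsCompl V₁ V₂ ∧ IsOrtho H V₁ V₂ := hdec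
  set A := Algebra.adjoin K {s.toLinearMap}
  have : Finite (Module.End K V) := Module.finite_of_finite K
  have : Finite A := Module.finite_of_finite K
  have hσ : Function.Involutive (· ^ q : K → K) := fun c => by
    show (c ^ q) ^ q = c
    rw [← pow_mul, ← sq, ← hK, FiniteField.pow_card]
  have hadj (a : A) : ∃ b : A, IsAdjointPair H a b ∧ IsAdjointPair H b a := by
    obtain ⟨b, hb, hab⟩ := exists_isAdjointPair_mem_adjoin h_smul_left h_smul_right
      (s.isAdjointPair_symm (H := H) hs)
      (LinearMap.GeneralLinearGroup.ofLinearEquiv s).inv_mem_adjoin a.2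
    exact ⟨⟨b, hb⟩, hab, hab.symm hσ h_symm⟩
  have hsa (a : A) : Commute (s : Module.End K V) a := Algebra.commute_of_mem_adjoin_self a.2
  have hcomm (a b : A) : Commute (a : Module.End K V) b := congrArg Subtype.val (mul_comm a b)
  have : IsReduced A := (isReduced_iff_pow_one_lt 2 one_lt_two).2 fun a ha => by
    obtain ⟨b, hab, hba⟩ := hadj a
    exact Subtype.ext <| hab.eq_zero_of_mul_self_eq_zero hiso' hba (hsa a) (hsa b) (hcomm a b)
      (by simpa [sq] using congrArg Subtype.val ha)
  refine isField_of_finite_of_isReduced fun e he => ?_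
  obtain ⟨b, heb, hbe⟩ := hadj e
  exact ((he.map A.val).eq_zero_or_eq_one_of_isAdjointPair h_nondeg hiso' hdec' heb hbe (hsa e)
    (hsa b) (hcomm e b)).imp Subtype.ext Subtype.ext

/-- If a unitary automorphism `s` of a nondegenerate hermitian space `(V, h)` stabilizes no
nonzero isotropic subspace and no nontrivial orthogonal decomposition, then the subalgebra
`K[s] ⊆ End_K(V)` generated by `s` is a field. -/
theorem adjoin_unitary_isField
    (q : ℕ) (hq : IsPrimePow q)
    (K : Type*) [Field K] [Fintype K] (hK : Fintype.card K = q ^ 2)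
    (V : Type*) [AddCommGroup V] [Module K V] [FiniteDimensional K V] [Nontrivial V]
    (h : V → V → K)
    (h_add_left : ∀ x x' y : V, h (x + x') y = h x y + h x' y)
    (h_add_right : ∀ x y y' : V, h x (y + y') = h x y + h x y')
    (h_smul_left : ∀ (c : K) (x y : V), h (c • x) y = c ^ q * h x y)
    (h_smul_right : ∀ (c : K) (x y : V), h x (c • y) = c * h x y)
    (h_symm : ∀ x y : V, h y x = (h x y) ^ q)
    (h_nondeg : ∀ x : V, (∀ y : V, h x y = 0) → x = 0)
    (s : V ≃ₗ[K] V)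
    (hs : ∀ x y : V, h (s x) (s y) = h x y)
    (hiso : ∀ W : Submodule K V, (∀ w ∈ W, s w ∈ W) →
      (∀ w ∈ W, ∀ w' ∈ W, h w w' = 0) → W = ⊥)
    (hdec : ¬ ∃ V₁ V₂ : Submodule K V, V₁ ≠ ⊥ ∧ V₂ ≠ ⊥ ∧
      (∀ v ∈ V₁, s v ∈ V₁) ∧ (∀ v ∈ V₂, s v ∈ V₂) ∧ IsCompl V₁ V₂ ∧
      (∀ x ∈ V₁, ∀ y ∈ V₂, h x y = 0)) :
    IsField ↥(Algebra.adjoin K {s.toLinearMap}) :=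
  adjoin_unitary_isField_general q K hK V h h_add_left h_add_right h_smul_left h_smul_right h_symm
    h_nondeg s hs hiso hdec
end

section
/- Let s be a unitary automorphism of (V,h). Assume that the only s-stable isotropic subspace of V is the zero subspace, and that there is no orthogonal decomposition V = V₁ ⊕ V₂ with V₁ and V₂ both nonzero s-stable subspaces. Let E = K[s] be the K-subalgebra of End_K(V) generated by s (which is a field stable under the adjoint operation f ↦ f†), and let E₊ = {f ∈ E : f† = f}. Then E₊ is a subfield of E, the cardinality of E equals the square of the cardinality of E₊, and the cardinality of E₊ equals q^k for some odd natural number k; that is, E/E₊ is a quadratic extension and the degree of E₊ over the field with q elements is odd. -/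
/-!
The adjoint restricts to a ring automorphism `σ` of the commutative algebra `E = K[s]`
(because `adj s = s⁻¹`) with `σ² = 1`, acting on the scalars as `c ↦ c ^ q`. If `f ∈ E` and
`adj f * f = 0`, the range of `f` is an `s`-stable isotropic subspace, so `f = 0`. This makes
`E` reduced and makes every idempotent `e ∈ E` self-adjoint, so that `range e ⊕ ker e` is an
orthogonal `s`-stable decomposition and `e ∈ {0, 1}`; a finite reduced ring without nontrivial
idempotents is a field. As `σ` moves some scalar, it has order `2`, and Artin's theorem gives
`|E| = |E₊|²`. Writing `|E| = q ^ (2 d)`, we get `|E₊| = q ^ d`; if `d` were even, the subfield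
`E₊` would contain every `x` with `x ^ (q ^ d) = x`, in particular all of `K`, on which `σ` is
not trivial.
-/

section FiniteField

open Polynomial

theorem Subfield.mem_iff_pow_card_eq_self {L : Type*} [Field L] (F : Subfield L) [Fintype F]
    {x : L} : x ∈ F ↔ x ^ Fintype.card F = x := by
  have hne := FiniteField.X_pow_card_sub_X_ne_zero L (Fintype.one_lt_card (α := F))
  have hsplit : Splits (X ^ Fintype.card F - X : F[X]) := by
    rw [splits_iff_card_roots, FiniteField.roots_X_pow_card_sub_X, ← Finset.card_def,
      Finset.card_univ, FiniteField.X_pow_card_sub_X_natDegree_eq _ Fintype.one_lt_card]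
  have := FiniteField.roots_X_pow_card_sub_X F ▸ hsplit.roots_map F.subtype ▸
    Multiset.mem_map (b := x)
  rw [Ne, sub_eq_zero] at hne
  simpa [sub_eq_zero, iff_comm, hne] using this

theorem FiniteField.exists_pow_ne_self {K : Type*} [Field K] [Fintype K] {n : ℕ} (hn : 1 < n)
    (hnK : n < Fintype.card K) : ∃ c : K, c ^ n ≠ c := by
  by_contra! hfix
  refine FiniteField.X_pow_card_sub_X_ne_zero K hn
    (eq_zero_of_forall_eval_zero_of_natDegree_lt_card _ (fun c => by simp [hfix c]) ?_)
  rw [FiniteField.X_pow_card_sub_X_natDegree_eq K hn, Cardinal.mk_fintype]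
  exact_mod_cast hnK

end FiniteField

theorem Subfield.exists_odd_card_eq_pow_of_algebraMap_notMem {K L : Type*} [Field K] [Fintype K]
    [Field L] [Finite L] [Algebra K L] {q : ℕ} (hK : Fintype.card K = q ^ 2) (F : Subfield L)
    (hcard : Nat.card L = Nat.card F ^ 2) (hKF : ∃ c : K, algebraMap K L c ∉ F) :
    ∃ k, Odd k ∧ Nat.card F = q ^ k := by
  have := Fintype.ofFinite L
  have := Fintype.ofFinite F
  obtain ⟨c, hc⟩ := hKF
  set d := Module.finrank K L
  have hL : Nat.card L = q ^ (2 * d) := by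
    rw [Nat.card_eq_fintype_card, Module.card_eq_pow_finrank (K := K), hK, ← pow_mul]
  have hF : Nat.card F = q ^ d := Nat.pow_left_injective two_ne_zero <| by
    simp only [← hcard, hL, ← pow_mul, mul_comm]
  refine ⟨d, Nat.not_even_iff_odd.1 fun ⟨m, hm⟩ => hc ?_, hF⟩
  rw [Subfield.mem_iff_pow_card_eq_self, ← Nat.card_eq_fintype_card, hF, ← map_pow, hm,
    ← two_mul, pow_mul, ← hK, FiniteField.pow_card_pow]

theorem FixedPoints.mem_subfield_zpowers_iff {L : Type*} [Field L] (σ : L ≃+* L) {x : L} :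
    x ∈ FixedPoints.subfield (Subgroup.zpowers σ) L ↔ σ x = x := by
  refine ⟨fun hx => hx ⟨σ, Subgroup.mem_zpowers σ⟩, fun hx ⟨_, j, hj⟩ => ?_⟩
  subst hj
  exact MulAction.mem_fixedBy_zpow (g := σ) hx j

theorem FixedPoints.card_eq_card_subfield_zpowers_pow_orderOf {L : Type*} [Field L] [Finite L]
    (σ : L ≃+* L) :
    Nat.card L = Nat.card (FixedPoints.subfield (Subgroup.zpowers σ) L) ^ orderOf σ := by
  set F := FixedPoints.subfield (Subgroup.zpowers σ) L
  have : Finite (L ≃+* L) := Finite.of_injective _ DFunLike.coe_injective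
  have := Fintype.ofFinite (Subgroup.zpowers σ)
  have := Fintype.ofFinite L
  have := Fintype.ofFinite F
  rw [← Nat.card_zpowers, Nat.card_eq_fintype_card (α := Subgroup.zpowers σ),
    ← FixedPoints.finrank_eq_card (Subgroup.zpowers σ) L, Nat.card_eq_fintype_card (α := L),
    Nat.card_eq_fintype_card (α := F), Module.card_eq_pow_finrank (K := F) (V := L)]

theorem FixedPoints.card_subfield_zpowers_of_frobenius {K L : Type*} [Field K] [Fintype K]
    [Field L] [Finite L] [Algebra K L] {q : ℕ} (hK : Fintype.card K = q ^ 2) (σ : L ≃+* L)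
    (hσ2 : σ * σ = 1) (hσK : ∀ c : K, σ (algebraMap K L c) = algebraMap K L (c ^ q)) :
    Nat.card L = Nat.card (FixedPoints.subfield (Subgroup.zpowers σ) L) ^ 2 ∧
      ∃ k, Odd k ∧ Nat.card (FixedPoints.subfield (Subgroup.zpowers σ) L) = q ^ k := by
  have hq : 1 < q := (Nat.one_lt_pow_iff two_ne_zero).1 (hK ▸ Fintype.one_lt_card)
  obtain ⟨c, hc⟩ := FiniteField.exists_pow_ne_self hq (hK ▸ lt_self_pow₀ hq one_lt_two)
  have hcF : algebraMap K L c ∉ FixedPoints.subfield (Subgroup.zpowers σ) L := by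
    rwa [FixedPoints.mem_subfield_zpowers_iff, hσK, (algebraMap K L).injective.eq_iff]
  have hσ : orderOf σ = 2 := orderOf_eq_prime (sq σ ▸ hσ2) <| by
    rintro rfl
    exact hcF ((FixedPoints.mem_subfield_zpowers_iff 1).2 rfl)
  have hcard := hσ ▸ FixedPoints.card_eq_card_subfield_zpowers_pow_orderOf σ
  exact ⟨hcard, Subfield.exists_odd_card_eq_pow_of_algebraMap_notMem hK _ hcard ⟨c, hcF⟩⟩

section CommRing

variable {R : Type*} [CommRing R] (σ : R →+* R)

theorem isReduced_of_anisotropic (hσ : ∀ x, σ (σ x) = x)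
    (haniso : ∀ x, σ x * x = 0 → x = 0) : IsReduced R := by
  refine (isReduced_iff_pow_one_lt 2 one_lt_two).2 fun x hx => haniso x (haniso _ ?_)
  rw [map_mul, hσ]
  linear_combination σ x ^ 2 * hx

theorem IsIdempotentElem.map_eq_self_of_anisotropic (hσ : ∀ x, σ (σ x) = x)
    (haniso : ∀ x, σ x * x = 0 → x = 0) {e : R} (he : IsIdempotentElem e) : σ e = e := by
  have absorb : ∀ a : R, IsIdempotentElem a → a = a * σ a := fun a ha => by
    have : a * (1 - σ a) = 0 := haniso _ <| by
      rw [map_mul, map_sub, map_one, hσ]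
      linear_combination (-(σ a * (1 - σ a))) * ha.eq
    linear_combination this
  have h1 := absorb e he
  have h2 := absorb (σ e) (he.map σ)
  rw [hσ] at h2
  rw [h2, mul_comm, ← h1]

theorem IsArtinianRing.isField_of_isReduced_of_isIdempotentElem [IsArtinianRing R] [Nontrivial R]
    [IsReduced R] (hidem : ∀ e : R, IsIdempotentElem e → e = 0 ∨ e = 1) : IsField R := by
  refine ⟨exists_pair_ne R, mul_comm, fun {x} hx => ?_⟩
  obtain ⟨n, y, hy⟩ := IsArtinian.exists_pow_succ_smul_dvd x (1 : R)
  simp only [smul_eq_mul, mul_one, Nat.succ_eq_add_one] at hy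
  have hstable : ∀ k, x ^ n * (x * y) ^ k = x ^ n := fun k => by
    induction k with
    | zero => rw [pow_zero, mul_one]
    | succ k ih => rw [pow_succ, ← mul_assoc, ih]; linear_combination hy
  have hstable' : x ^ (n + 1) * (x * y) ^ (n + 1) = x ^ (n + 1) := by
    linear_combination x * hstable (n + 1)
  have he : IsIdempotentElem ((x * y) ^ (n + 1)) := by
    unfold IsIdempotentElem
    linear_combination y ^ (n + 1) * hstable'
  rcases hidem _ he with he0 | he1
  · refine absurd (IsNilpotent.eq_zero ⟨n + 1, ?_⟩) hx
    rw [← hstable', he0, mul_zero]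
  · exact ⟨x ^ n * y ^ (n + 1), by linear_combination he1⟩

end CommRing

theorem LinearEquiv.symm_mem_adjoin {K V : Type*} [Field K] [AddCommGroup V] [Module K V]
    [Finite V] (s : V ≃ₗ[K] V) :
    (s.symm : Module.End K V) ∈ Algebra.adjoin K {(s : Module.End K V)} := by
  have : Finite (V ≃ₗ[K] V) := Finite.of_injective _ DFunLike.coe_injective
  have hinv : s⁻¹ = s ^ (orderOf s - 1) := by
    rw [inv_eq_iff_mul_eq_one, ← pow_succ', Nat.sub_add_cancel (orderOf_pos s),
      pow_orderOf_eq_one]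
  change LinearEquiv.automorphismGroup.toLinearMapMonoidHom s⁻¹ ∈ _
  rw [hinv, map_pow]
  exact pow_mem (Algebra.self_mem_adjoin_singleton K _) _

section Hermitian

variable {K V : Type*} [Field K] [AddCommGroup V] [Module K V]

structure IsNondegHermitianForm (q : ℕ) (h : V → V → K) : Prop where
  add_left : ∀ x x' y, h (x + x') y = h x y + h x' y
  add_right : ∀ x y y', h x (y + y') = h x y + h x y'
  smul_left : ∀ (c : K) x y, h (c • x) y = c ^ q * h x y
  smul_right : ∀ (c : K) x y, h x (c • y) = c * h x y
  symm : ∀ x y, h y x = h x y ^ q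
  nondeg : ∀ x, (∀ y, h x y = 0) → x = 0

namespace IsNondegHermitianForm

variable {q : ℕ} {h : V → V → K} {adj : Module.End K V → Module.End K V}

theorem apply_zero_right (hh : IsNondegHermitianForm q h) (x : V) : h x 0 = 0 := by
  simpa using hh.smul_right 0 x 0

theorem eq_of_forall_apply_eq (hh : IsNondegHermitianForm q h) {u v : V}
    (huv : ∀ x, h x u = h x v) : u = v := by
  rw [← sub_eq_zero]
  refine hh.nondeg _ fun y => ?_
  have := hh.add_left (u - v) v y
  rw [sub_add_cancel, hh.symm, huv, ← hh.symm] at this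
  linear_combination -this

theorem adj_eq (hh : IsNondegHermitianForm q h) (hadj : ∀ f x y, h (f x) y = h x (adj f y))
    {f g : Module.End K V} (hfg : ∀ x y, h (f x) y = h x (g y)) : adj f = g :=
  LinearMap.ext fun y => hh.eq_of_forall_apply_eq fun x => by rw [← hadj, hfg]

theorem adj_one (hh : IsNondegHermitianForm q h) (hadj : ∀ f x y, h (f x) y = h x (adj f y)) :
    adj 1 = 1 :=
  hh.adj_eq hadj fun _ _ => rfl

theorem adj_add (hh : IsNondegHermitianForm q h) (hadj : ∀ f x y, h (f x) y = h x (adj f y))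
    (f g : Module.End K V) : adj (f + g) = adj f + adj g :=
  hh.adj_eq hadj fun x y => by simp only [LinearMap.add_apply, hh.add_left, hh.add_right, hadj]

theorem adj_mul (hh : IsNondegHermitianForm q h) (hadj : ∀ f x y, h (f x) y = h x (adj f y))
    (f g : Module.End K V) : adj (f * g) = adj g * adj f :=
  hh.adj_eq hadj fun x y => by simp only [Module.End.mul_apply, hadj]

theorem adj_smul (hh : IsNondegHermitianForm q h) (hadj : ∀ f x y, h (f x) y = h x (adj f y))
    (c : K) (f : Module.End K V) : adj (c • f) = c ^ q • adj f :=
  hh.adj_eq hadj fun x y => by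
    simp only [LinearMap.smul_apply, hh.smul_left, hh.smul_right, hadj]

theorem adj_algebraMap (hh : IsNondegHermitianForm q h)
    (hadj : ∀ f x y, h (f x) y = h x (adj f y)) (c : K) :
    adj (algebraMap K (Module.End K V) c) = algebraMap K (Module.End K V) (c ^ q) := by
  rw [Algebra.algebraMap_eq_smul_one, hh.adj_smul hadj, hh.adj_one hadj,
    Algebra.algebraMap_eq_smul_one]

theorem adj_adj (hh : IsNondegHermitianForm q h) (hadj : ∀ f x y, h (f x) y = h x (adj f y))
    (f : Module.End K V) : adj (adj f) = f :=
  hh.adj_eq hadj fun x y => by rw [hh.symm, ← hadj, ← hh.symm]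

theorem adj_eq_symm_of_isometry (hh : IsNondegHermitianForm q h)
    (hadj : ∀ f x y, h (f x) y = h x (adj f y)) {s : V ≃ₗ[K] V}
    (hs : ∀ x y, h (s x) (s y) = h x y) : adj s = s.symm :=
  hh.adj_eq hadj fun x y => by
    change h (s x) y = h x (s.symm y)
    rw [← hs x (s.symm y), s.apply_symm_apply]

theorem adj_mem_adjoin [Finite V] (hh : IsNondegHermitianForm q h)
    (hadj : ∀ f x y, h (f x) y = h x (adj f y)) {s : V ≃ₗ[K] V}
    (hs : ∀ x y, h (s x) (s y) = h x y) {f : Module.End K V}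
    (hf : f ∈ Algebra.adjoin K {(s : Module.End K V)}) :
    adj f ∈ Algebra.adjoin K {(s : Module.End K V)} := by
  induction hf using Algebra.adjoin_induction with
  | mem x hx =>
    rw [Set.mem_singleton_iff.1 hx, hh.adj_eq_symm_of_isometry hadj hs]
    exact s.symm_mem_adjoin
  | algebraMap c =>
    rw [hh.adj_algebraMap hadj]
    exact Subalgebra.algebraMap_mem _ _
  | add f g _ _ hf hg =>
    rw [hh.adj_add hadj]
    exact add_mem hf hg
  | mul f g _ _ hf hg =>
    rw [hh.adj_mul hadj]
    exact mul_mem hg hf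

theorem eq_zero_of_adj_mul_self_eq_zero (hh : IsNondegHermitianForm q h)
    (hadj : ∀ f x y, h (f x) y = h x (adj f y)) {s : V ≃ₗ[K] V}
    (hiso : ∀ W : Submodule K V, (∀ w ∈ W, s w ∈ W) →
      (∀ w ∈ W, ∀ w' ∈ W, h w w' = 0) → W = ⊥)
    {f : Module.End K V} (hsf : Commute (s : Module.End K V) f) (hf : adj f * f = 0) : f = 0 := by
  refine LinearMap.range_eq_bot.1 (hiso _ ?_ ?_)
  · rintro _ ⟨x, rfl⟩
    exact ⟨s x, (LinearMap.congr_fun hsf x).symm⟩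
  · rintro _ ⟨x, rfl⟩ _ ⟨y, rfl⟩
    rw [hadj, ← Module.End.mul_apply, hf, LinearMap.zero_apply, hh.apply_zero_right]

theorem eq_zero_or_eq_one_of_isIdempotentElem (hh : IsNondegHermitianForm q h)
    (hadj : ∀ f x y, h (f x) y = h x (adj f y)) {s : V ≃ₗ[K] V}
    (hdec : ¬ ∃ V₁ V₂ : Submodule K V, V₁ ≠ ⊥ ∧ V₂ ≠ ⊥ ∧
      (∀ v ∈ V₁, s v ∈ V₁) ∧ (∀ v ∈ V₂, s v ∈ V₂) ∧ IsCompl V₁ V₂ ∧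
      (∀ x ∈ V₁, ∀ y ∈ V₂, h x y = 0))
    {e : Module.End K V} (hse : Commute (s : Module.End K V) e) (he : IsIdempotentElem e)
    (hadje : adj e = e) : e = 0 ∨ e = 1 := by
  by_contra! hne
  obtain ⟨hrange, hker⟩ := (LinearMap.IsIdempotentElem.commute_iff he).1 hse.symm
  refine hdec ⟨LinearMap.range e, LinearMap.ker e, LinearMap.range_eq_bot.not.2 hne.1, ?_,
    hrange, hker, LinearMap.IsIdempotentElem.isCompl he, ?_⟩
  · rw [LinearMap.IsIdempotentElem.ker_eq_range_one_sub he, Ne, LinearMap.range_eq_bot,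
      sub_eq_zero]
    exact hne.2.symm
  · rintro _ ⟨x, rfl⟩ y hy
    rw [hadj, hadje, hy, hh.apply_zero_right]

def adjointRingEquiv [Finite V] (hh : IsNondegHermitianForm q h)
    (hadj : ∀ f x y, h (f x) y = h x (adj f y)) {s : V ≃ₗ[K] V}
    (hs : ∀ x y, h (s x) (s y) = h x y) :
    Algebra.adjoin K {(s : Module.End K V)} ≃+* Algebra.adjoin K {(s : Module.End K V)} where
  toFun f := ⟨adj f, hh.adj_mem_adjoin hadj hs f.2⟩
  invFun f := ⟨adj f, hh.adj_mem_adjoin hadj hs f.2⟩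
  left_inv f := Subtype.ext (hh.adj_adj hadj f)
  right_inv f := Subtype.ext (hh.adj_adj hadj f)
  map_mul' f g := Subtype.ext <| by
    change adj (f * g : Module.End K V) = adj f * adj g
    rw [hh.adj_mul hadj]
    exact (Algebra.commute_of_mem_adjoin_singleton_of_commute (hh.adj_mem_adjoin hadj hs f.2)
      (Algebra.commute_of_mem_adjoin_self (hh.adj_mem_adjoin hadj hs g.2)).symm).eq
  map_add' f g := Subtype.ext (hh.adj_add hadj f g)

open scoped IsMulCommutative in
theorem isField_adjoin [Finite V] [Nontrivial V] (hh : IsNondegHermitianForm q h)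
    (hadj : ∀ f x y, h (f x) y = h x (adj f y)) {s : V ≃ₗ[K] V}
    (hs : ∀ x y, h (s x) (s y) = h x y)
    (hiso : ∀ W : Submodule K V, (∀ w ∈ W, s w ∈ W) →
      (∀ w ∈ W, ∀ w' ∈ W, h w w' = 0) → W = ⊥)
    (hdec : ¬ ∃ V₁ V₂ : Submodule K V, V₁ ≠ ⊥ ∧ V₂ ≠ ⊥ ∧
      (∀ v ∈ V₁, s v ∈ V₁) ∧ (∀ v ∈ V₂, s v ∈ V₂) ∧ IsCompl V₁ V₂ ∧
      (∀ x ∈ V₁, ∀ y ∈ V₂, h x y = 0)) :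
    IsField (Algebra.adjoin K {(s : Module.End K V)}) := by
  set E := Algebra.adjoin K {(s : Module.End K V)}
  have : Finite (Module.End K V) := Finite.of_injective _ LinearMap.coe_injective
  have : IsArtinianRing E := isArtinian_of_finite
  let σ : E →+* E := hh.adjointRingEquiv hadj hs
  have hσ : ∀ x, σ (σ x) = x := fun x => Subtype.ext (hh.adj_adj hadj x)
  have haniso : ∀ x, σ x * x = 0 → x = 0 := fun x hx => Subtype.ext <|
    hh.eq_zero_of_adj_mul_self_eq_zero hadj hiso (Algebra.commute_of_mem_adjoin_self x.2)
      (congrArg Subtype.val hx)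
  have : IsReduced E := isReduced_of_anisotropic σ hσ haniso
  refine IsArtinianRing.isField_of_isReduced_of_isIdempotentElem fun e he => ?_
  have := hh.eq_zero_or_eq_one_of_isIdempotentElem hadj hdec
    (Algebra.commute_of_mem_adjoin_self e.2) (he.map E.val)
    (congrArg Subtype.val (he.map_eq_self_of_anisotropic σ hσ haniso))
  exact this.imp Subtype.ext Subtype.ext

end IsNondegHermitianForm

end Hermitian

theorem adjoint_fixed_subfield_quadratic_odd_general
    (q : ℕ)
    (K : Type*) [Field K] [Fintype K] (hK : Fintype.card K = q ^ 2)
    (V : Type*) [AddCommGroup V] [Module K V] [FiniteDimensional K V] [Nontrivial V]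
    (h : V → V → K)
    (h_add_left : ∀ x x' y : V, h (x + x') y = h x y + h x' y)
    (h_add_right : ∀ x y y' : V, h x (y + y') = h x y + h x y')
    (h_smul_left : ∀ (c : K) (x y : V), h (c • x) y = c ^ q * h x y)
    (h_smul_right : ∀ (c : K) (x y : V), h x (c • y) = c * h x y)
    (h_symm : ∀ x y : V, h y x = (h x y) ^ q)
    (h_nondeg : ∀ x : V, (∀ y : V, h x y = 0) → x = 0)
    (adj : Module.End K V → Module.End K V)
    (hadj : ∀ (f : Module.End K V) (x y : V), h (f x) y = h x (adj f y))
    (s : V ≃ₗ[K] V)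
    (hs : ∀ x y : V, h (s x) (s y) = h x y)
    (hiso : ∀ W : Submodule K V, (∀ w ∈ W, s w ∈ W) →
      (∀ w ∈ W, ∀ w' ∈ W, h w w' = 0) → W = ⊥)
    (hdec : ¬ ∃ V₁ V₂ : Submodule K V, V₁ ≠ ⊥ ∧ V₂ ≠ ⊥ ∧
      (∀ v ∈ V₁, s v ∈ V₁) ∧ (∀ v ∈ V₂, s v ∈ V₂) ∧ IsCompl V₁ V₂ ∧
      (∀ x ∈ V₁, ∀ y ∈ V₂, h x y = 0)) :
    let E := Algebra.adjoin K {s.toLinearMap}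
    let S : Set (Module.End K V) := {f | f ∈ E ∧ adj f = f}
    -- `E₊ = S` is a subfield of the field `E`:
    ((0 : Module.End K V) ∈ S ∧ (1 : Module.End K V) ∈ S ∧
      (∀ f ∈ S, ∀ g ∈ S, f + g ∈ S) ∧ (∀ f ∈ S, -f ∈ S) ∧
      (∀ f ∈ S, ∀ g ∈ S, f * g ∈ S) ∧
      (∀ f ∈ S, f ≠ 0 → ∃ g ∈ S, f * g = 1)) ∧
    -- `E/E₊` is quadratic:
    Nat.card ↥E = (Nat.card ↥S) ^ 2 ∧
    -- `[E₊ : 𝔽_q]` is odd: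
    (∃ k : ℕ, Odd k ∧ Nat.card ↥S = q ^ k) := by
  intro E S
  have hh : IsNondegHermitianForm q h :=
    ⟨h_add_left, h_add_right, h_smul_left, h_smul_right, h_symm, h_nondeg⟩
  have : Finite V := Module.finite_of_finite K
  have : Finite (Module.End K V) := Finite.of_injective _ LinearMap.coe_injective
  let _ : Field E := (hh.isField_adjoin hadj hs hiso hdec).toField
  let σ : E ≃+* E := hh.adjointRingEquiv hadj hs
  obtain ⟨hcard, hodd⟩ := FixedPoints.card_subfield_zpowers_of_frobenius hK σ
    (RingEquiv.ext fun x => Subtype.ext (hh.adj_adj hadj x))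
    (fun c => Subtype.ext (hh.adj_algebraMap hadj c))
  set F := FixedPoints.subfield (Subgroup.zpowers σ) E
  have hF (x : E) : x ∈ F ↔ adj x = x :=
    (FixedPoints.mem_subfield_zpowers_iff σ).trans Subtype.ext_iff
  have hSF : S = F.toSubring.map (E.val : E →+* Module.End K V) := by
    ext f
    refine ⟨fun ⟨hfE, hf⟩ => ⟨⟨f, hfE⟩, (hF _).2 hf, rfl⟩, ?_⟩
    rintro ⟨x, hx, rfl⟩
    exact ⟨x.2, (hF x).1 hx⟩
  have hS : Nat.card S = Nat.card F := by
    rw [hSF, Subring.coe_map, Nat.card_image_of_injective (by exact Subtype.val_injective)]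
    rfl
  refine ⟨?_, hS ▸ hcard, hS ▸ hodd⟩
  rw [hSF]
  refine ⟨zero_mem _, one_mem _, fun _ hf _ hg => add_mem hf hg, fun _ => neg_mem,
    fun _ hf _ hg => mul_mem hf hg, ?_⟩
  rintro _ ⟨x, hx, rfl⟩ hx0
  exact ⟨_, ⟨x⁻¹, F.inv_mem hx, rfl⟩,
    congrArg Subtype.val (mul_inv_cancel₀ fun h0 => hx0 (congrArg Subtype.val h0))⟩

/-- Under the hypotheses of Lemma `inv` in the paper: `E = K[s]` is stable under the
adjoint, the fixed points `E₊` of the adjoint form a subfield of `E`, `E/E₊` is a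
quadratic extension (`|E| = |E₊|²`), and `[E₊ : 𝔽_q]` is odd (`|E₊| = q ^ k` with `k` odd). -/
theorem adjoint_fixed_subfield_quadratic_odd
    (q : ℕ) (hq : IsPrimePow q)
    (K : Type*) [Field K] [Fintype K] (hK : Fintype.card K = q ^ 2)
    (V : Type*) [AddCommGroup V] [Module K V] [FiniteDimensional K V] [Nontrivial V]
    (h : V → V → K)
    (h_add_left : ∀ x x' y : V, h (x + x') y = h x y + h x' y)
    (h_add_right : ∀ x y y' : V, h x (y + y') = h x y + h x y')
    (h_smul_left : ∀ (c : K) (x y : V), h (c • x) y = c ^ q * h x y)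
    (h_smul_right : ∀ (c : K) (x y : V), h x (c • y) = c * h x y)
    (h_symm : ∀ x y : V, h y x = (h x y) ^ q)
    (h_nondeg : ∀ x : V, (∀ y : V, h x y = 0) → x = 0)
    (adj : Module.End K V → Module.End K V)
    (hadj : ∀ (f : Module.End K V) (x y : V), h (f x) y = h x (adj f y))
    (s : V ≃ₗ[K] V)
    (hs : ∀ x y : V, h (s x) (s y) = h x y)
    (hiso : ∀ W : Submodule K V, (∀ w ∈ W, s w ∈ W) →
      (∀ w ∈ W, ∀ w' ∈ W, h w w' = 0) → W = ⊥)
    (hdec : ¬ ∃ V₁ V₂ : Submodule K V, V₁ ≠ ⊥ ∧ V₂ ≠ ⊥ ∧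
      (∀ v ∈ V₁, s v ∈ V₁) ∧ (∀ v ∈ V₂, s v ∈ V₂) ∧ IsCompl V₁ V₂ ∧
      (∀ x ∈ V₁, ∀ y ∈ V₂, h x y = 0)) :
    let E := Algebra.adjoin K {s.toLinearMap}
    let S : Set (Module.End K V) := {f | f ∈ E ∧ adj f = f}
    -- `E₊ = S` is a subfield of the field `E`:
    ((0 : Module.End K V) ∈ S ∧ (1 : Module.End K V) ∈ S ∧
      (∀ f ∈ S, ∀ g ∈ S, f + g ∈ S) ∧ (∀ f ∈ S, -f ∈ S) ∧
      (∀ f ∈ S, ∀ g ∈ S, f * g ∈ S) ∧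
      (∀ f ∈ S, f ≠ 0 → ∃ g ∈ S, f * g = 1)) ∧
    -- `E/E₊` is quadratic:
    Nat.card ↥E = (Nat.card ↥S) ^ 2 ∧
    -- `[E₊ : 𝔽_q]` is odd:
    (∃ k : ℕ, Odd k ∧ Nat.card ↥S = q ^ k) :=
  adjoint_fixed_subfield_quadratic_odd_general q K hK V h h_add_left h_add_right h_smul_left
    h_smul_right h_symm h_nondeg adj hadj s hs hiso hdec
end

section
/- Let s be a unitary automorphism of (V,h). Assume that the only s-stable isotropic subspace of V is the zero subspace, and that there is no orthogonal decomposition V = V₁ ⊕ V₂ with V₁ and V₂ both nonzero s-stable subspaces. Let E = K[s] be the K-subalgebra of End_K(V) generated by s (which is a field). Then V, regarded as a vector space over E via evaluation of endomorphisms, is one-dimensional; equivalently, the dimension of V over K equals the dimension of E over K. -/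
/-!
Pick `v ≠ 0`; the cyclic subspace `W = K[s] v` is `s`-stable. Its radical `W ∩ ⊥W` (with `⊥W`
the left orthogonal of `W`) is `s`-stable and isotropic, hence zero. Over a finite field a
subspace with trivial radical has `⊥W` as a complement (count `W` against its dual), and `⊥W` is
again `s`-stable, so indecomposability forces `⊥W = 0`, i.e. `W = V`. Since `K[s]` is
commutative and `v` is cyclic, evaluation at `v` is then an isomorphism `K[s] ≃ V`.
-/

section CyclicSubmodule

open scoped Algebra

variable {K V : Type*} [Field K] [AddCommGroup V] [Module K V]

def cyclicSubmodule (f : Module.End K V) (v : V) : Submodule K V :=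
  (Subalgebra.toSubmodule K[f]).map (LinearMap.applyₗ v)

variable {f : Module.End K V} {v : V}

theorem mem_cyclicSubmodule {w : V} : w ∈ cyclicSubmodule f v ↔ ∃ g ∈ K[f], g v = w :=
  Iff.rfl

theorem self_mem_cyclicSubmodule : v ∈ cyclicSubmodule f v :=
  mem_cyclicSubmodule.2 ⟨1, one_mem _, rfl⟩

theorem apply_mem_cyclicSubmodule {w : V} (hw : w ∈ cyclicSubmodule f v) :
    f w ∈ cyclicSubmodule f v := by
  obtain ⟨g, hg, rfl⟩ := mem_cyclicSubmodule.1 hw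
  exact mem_cyclicSubmodule.2 ⟨f * g, mul_mem (Algebra.self_mem_adjoin_singleton K f) hg, rfl⟩

/-- Evaluation at a cyclic vector is injective on `K[f]` because `K[f]` is commutative. -/
theorem finrank_adjoin_eq_of_cyclicSubmodule_eq_top (hv : cyclicSubmodule f v = ⊤) :
    Module.finrank K K[f] = Module.finrank K V := by
  have hcyc : ∀ w : V, ∃ g ∈ K[f], g v = w := fun w => mem_cyclicSubmodule.1 (hv ▸ trivial)
  let ev : K[f] →ₗ[K] V := (LinearMap.applyₗ v).comp K[f].val.toLinearMap
  have hinj : Function.Injective ev := by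
    rw [← LinearMap.ker_eq_bot, LinearMap.ker_eq_bot']
    intro g hgv
    ext w
    obtain ⟨g', hg', rfl⟩ := hcyc w
    have hcomm : Commute (g : Module.End K V) g' :=
      Algebra.commute_of_mem_adjoin_singleton_of_commute hg'
        (Algebra.commute_of_mem_adjoin_self g.2).symm
    change (g * g' : Module.End K V) v = 0
    rw [hcomm.eq, Module.End.mul_apply]
    exact (congrArg g' hgv).trans (map_zero g')
  have hsurj : Function.Surjective ev := fun w =>
    let ⟨g, hg, hgv⟩ := hcyc w
    ⟨⟨g, hg⟩, hgv⟩
  exact (LinearEquiv.ofBijective ev ⟨hinj, hsurj⟩).finrank_eq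

end CyclicSubmodule

section Sesquilinear

variable {K V : Type*} [Field K] [AddCommGroup V] [Module K V]
  (B : V →+ V →ₗ[K] K) {σ : K → K} (hB : ∀ (c : K) (x : V), B (c • x) = σ c • B x)

def leftOrthogonal (W : Submodule K V) : Submodule K V where
  carrier := {y | ∀ w ∈ W, B y w = 0}
  zero_mem' w _ := by simp
  add_mem' {a b} ha hb w hw := by simp [ha w hw, hb w hw]
  smul_mem' c a ha w hw := by simp [hB, ha w hw]

variable {B hB} {W : Submodule K V}

theorem mem_leftOrthogonal {y : V} : y ∈ leftOrthogonal B hB W ↔ ∀ w ∈ W, B y w = 0 :=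
  Iff.rfl

theorem exists_mem_eqOn_of_radical_eq_zero [Finite K] [FiniteDimensional K V]
    (hW : ∀ x ∈ W, (∀ w ∈ W, B x w = 0) → x = 0) (y : V) :
    ∃ x ∈ W, ∀ w ∈ W, B x w = B y w := by
  have : Finite V := Module.finite_of_finite K
  have : Finite (Module.Dual K W) := Module.finite_of_finite K
  let restrict : W → Module.Dual K W := fun x => (B x).domRestrict W
  have hinj : Function.Injective restrict := by
    intro a b hab
    refine Subtype.ext (sub_eq_zero.1 (hW _ (W.sub_mem a.2 b.2) fun w hw => ?_))
    have := LinearMap.congr_fun hab ⟨w, hw⟩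
    simp only [restrict, LinearMap.domRestrict_apply] at this
    simp [this]
  have hcard : Nat.card (Module.Dual K W) ≤ Nat.card W := by
    rw [Module.natCard_eq_pow_finrank (K := K) (V := Module.Dual K W),
      Module.natCard_eq_pow_finrank (K := K) (V := W), Subspace.dual_finrank_eq]
  obtain ⟨x, hx⟩ := (hinj.bijective_of_nat_card_le hcard).2 ((B y).domRestrict W)
  exact ⟨x, x.2, fun w hw => LinearMap.congr_fun hx ⟨w, hw⟩⟩

theorem isCompl_leftOrthogonal [Finite K] [FiniteDimensional K V]
    (hW : ∀ x ∈ W, (∀ w ∈ W, B x w = 0) → x = 0) : IsCompl (leftOrthogonal B hB W) W := by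
  refine ⟨Submodule.disjoint_def.2 fun x hx hxW => hW x hxW hx, ?_⟩
  refine codisjoint_iff_le_sup.2 fun y _ => ?_
  obtain ⟨x, hxW, hx⟩ := exists_mem_eqOn_of_radical_eq_zero hW y
  have hyx : y - x ∈ leftOrthogonal B hB W :=
    mem_leftOrthogonal.2 fun w hw => by simp [hx w hw]
  simpa using Submodule.add_mem_sup hyx hxW

variable {s : V ≃ₗ[K] V}

theorem exists_mem_apply_eq_of_mapsTo [FiniteDimensional K V] (hW : ∀ w ∈ W, s w ∈ W)
    {w : V} (hw : w ∈ W) : ∃ w' ∈ W, s w' = w := by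
  have hmap : W.map (s : V →ₗ[K] V) = W :=
    Submodule.eq_of_le_of_finrank_le (Submodule.map_le_iff_le_comap.2 hW)
      (LinearEquiv.finrank_map_eq s W).ge
  exact hmap.ge hw

theorem mapsTo_leftOrthogonal [FiniteDimensional K V] (hs : ∀ x y, B (s x) (s y) = B x y)
    (hW : ∀ w ∈ W, s w ∈ W) :
    ∀ y ∈ leftOrthogonal B hB W, s y ∈ leftOrthogonal B hB W := by
  intro y hy w hw
  obtain ⟨w', hw', rfl⟩ := exists_mem_apply_eq_of_mapsTo hW hw
  rw [hs]
  exact hy w' hw'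

theorem eq_top_of_mapsTo [Finite K] [FiniteDimensional K V]
    (hB : ∀ (c : K) (x : V), B (c • x) = σ c • B x) (hs : ∀ x y, B (s x) (s y) = B x y)
    (hiso : ∀ W : Submodule K V, (∀ w ∈ W, s w ∈ W) →
      (∀ w ∈ W, ∀ w' ∈ W, B w w' = 0) → W = ⊥)
    (hdec : ¬ ∃ V₁ V₂ : Submodule K V, V₁ ≠ ⊥ ∧ V₂ ≠ ⊥ ∧
      (∀ v ∈ V₁, s v ∈ V₁) ∧ (∀ v ∈ V₂, s v ∈ V₂) ∧ IsCompl V₁ V₂ ∧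
      (∀ x ∈ V₁, ∀ y ∈ V₂, B x y = 0))
    (hW : ∀ w ∈ W, s w ∈ W) (hW₀ : W ≠ ⊥) : W = ⊤ := by
  have hWperp := mapsTo_leftOrthogonal (hB := hB) hs hW
  have hrad : W ⊓ leftOrthogonal B hB W = ⊥ :=
    hiso _ (fun w hw => ⟨hW w hw.1, hWperp w hw.2⟩) fun w hw w' hw' => hw.2 w' hw'.1
  have hcompl : IsCompl (leftOrthogonal B hB W) W := isCompl_leftOrthogonal fun x hxW hx =>
    (Submodule.mem_bot K).1 (hrad ▸ ⟨hxW, hx⟩)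
  have hperp : leftOrthogonal B hB W = ⊥ := by
    by_contra hne
    exact hdec ⟨_, W, hne, hW₀, hWperp, hW, hcompl, fun x hx y hy => hx y hy⟩
  exact eq_top_of_isCompl_bot (hperp ▸ hcompl.symm)

end Sesquilinear

theorem dim_one_over_adjoin_general
    (q : ℕ)
    (K : Type*) [Field K] [Fintype K]
    (V : Type*) [AddCommGroup V] [Module K V] [FiniteDimensional K V] [Nontrivial V]
    (h : V → V → K)
    (h_add_left : ∀ x x' y : V, h (x + x') y = h x y + h x' y)
    (h_add_right : ∀ x y y' : V, h x (y + y') = h x y + h x y')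
    (h_smul_left : ∀ (c : K) (x y : V), h (c • x) y = c ^ q * h x y)
    (h_smul_right : ∀ (c : K) (x y : V), h x (c • y) = c * h x y)
    (s : V ≃ₗ[K] V)
    (hs : ∀ x y : V, h (s x) (s y) = h x y)
    (hiso : ∀ W : Submodule K V, (∀ w ∈ W, s w ∈ W) →
      (∀ w ∈ W, ∀ w' ∈ W, h w w' = 0) → W = ⊥)
    (hdec : ¬ ∃ V₁ V₂ : Submodule K V, V₁ ≠ ⊥ ∧ V₂ ≠ ⊥ ∧
      (∀ v ∈ V₁, s v ∈ V₁) ∧ (∀ v ∈ V₂, s v ∈ V₂) ∧ IsCompl V₁ V₂ ∧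
      (∀ x ∈ V₁, ∀ y ∈ V₂, h x y = 0)) :
    -- `V` is spanned over `E = K[s]` by a single vector:
    (∃ v : V, ∀ w : V, ∃ f ∈ Algebra.adjoin K {s.toLinearMap}, f v = w) ∧
    -- equivalently, `dim_K V = dim_K E`:
    Module.finrank K V = Module.finrank K ↥(Algebra.adjoin K {s.toLinearMap}) := by
  let B : V →+ V →ₗ[K] K :=
    AddMonoidHom.mk' (fun x => ⟨⟨h x, h_add_right x⟩, (h_smul_right · x)⟩)
      fun x x' => LinearMap.ext (h_add_left x x')
  have hB : ∀ (c : K) (x : V), B (c • x) = c ^ q • B x := fun c x =>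
    LinearMap.ext (h_smul_left c x)
  obtain ⟨v, hv⟩ := exists_ne (0 : V)
  have htop : cyclicSubmodule s.toLinearMap v = ⊤ :=
    eq_top_of_mapsTo (B := B) hB hs hiso hdec (fun _ => apply_mem_cyclicSubmodule)
      fun hbot => hv ((Submodule.mem_bot K).1 (hbot ▸ self_mem_cyclicSubmodule))
  exact ⟨⟨v, fun w => mem_cyclicSubmodule.1 (htop ▸ trivial)⟩,
    (finrank_adjoin_eq_of_cyclicSubmodule_eq_top htop).symm⟩

/-- Under the hypotheses of Lemma `inv` in the paper, `V` is one-dimensional as a vector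
space over `E = K[s]` (acting by evaluation of endomorphisms); equivalently,
`dim_K V = dim_K E`. -/
theorem dim_one_over_adjoin
    (q : ℕ) (hq : IsPrimePow q)
    (K : Type*) [Field K] [Fintype K] (hK : Fintype.card K = q ^ 2)
    (V : Type*) [AddCommGroup V] [Module K V] [FiniteDimensional K V] [Nontrivial V]
    (h : V → V → K)
    (h_add_left : ∀ x x' y : V, h (x + x') y = h x y + h x' y)
    (h_add_right : ∀ x y y' : V, h x (y + y') = h x y + h x y')
    (h_smul_left : ∀ (c : K) (x y : V), h (c • x) y = c ^ q * h x y)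
    (h_smul_right : ∀ (c : K) (x y : V), h x (c • y) = c * h x y)
    (h_symm : ∀ x y : V, h y x = (h x y) ^ q)
    (h_nondeg : ∀ x : V, (∀ y : V, h x y = 0) → x = 0)
    (s : V ≃ₗ[K] V)
    (hs : ∀ x y : V, h (s x) (s y) = h x y)
    (hiso : ∀ W : Submodule K V, (∀ w ∈ W, s w ∈ W) →
      (∀ w ∈ W, ∀ w' ∈ W, h w w' = 0) → W = ⊥)
    (hdec : ¬ ∃ V₁ V₂ : Submodule K V, V₁ ≠ ⊥ ∧ V₂ ≠ ⊥ ∧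
      (∀ v ∈ V₁, s v ∈ V₁) ∧ (∀ v ∈ V₂, s v ∈ V₂) ∧ IsCompl V₁ V₂ ∧
      (∀ x ∈ V₁, ∀ y ∈ V₂, h x y = 0)) :
    -- `V` is spanned over `E = K[s]` by a single vector:
    (∃ v : V, ∀ w : V, ∃ f ∈ Algebra.adjoin K {s.toLinearMap}, f v = w) ∧
    -- equivalently, `dim_K V = dim_K E`:
    Module.finrank K V = Module.finrank K ↥(Algebra.adjoin K {s.toLinearMap}) :=
  dim_one_over_adjoin_general q K V h h_add_left h_add_right h_smul_left h_smul_right s hs hiso hdec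
end

section
/- Let q ≥ 2 be a natural number, let m ≥ 1 be an odd natural number, and let j ≥ 1 be a natural number. Set d = gcd(m, j). Then gcd(q^m + 1, q^(2j) − 1) = q^d + 1. -/
/-!
Write `m = d * k` with `k` odd and put `x = q ^ d`. Modulo `x ^ 2 - 1` we have `x ^ 2 ≡ 1`, hence
`x ^ k ≡ x`, so `gcd (q ^ m + 1) (q ^ (2 * d) - 1) = gcd (x + 1) (x ^ 2 - 1) = x + 1`. This gcd
divides `gcd (q ^ m + 1) (q ^ (2 * j) - 1)` because `q ^ (2 * d) - 1 ∣ q ^ (2 * j) - 1`;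
conversely the latter divides `gcd (q ^ (2 * m) - 1) (q ^ (2 * j) - 1) = q ^ (2 * d) - 1`.
-/

namespace Nat

lemma pow_modEq_self_of_odd (x : ℕ) {k : ℕ} (hk : Odd k) : x ^ k ≡ x [MOD x ^ 2 - 1] := by
  obtain ⟨n, rfl⟩ := hk
  refine (modEq_of_dvd' (le_self_pow (by lia) x) ?_).symm
  have hdvd : x ^ 2 - 1 ∣ x ^ (2 * n) - 1 := pow_sub_one_dvd_pow_sub_one x (dvd_mul_right 2 n)
  simpa [pow_succ, ← Nat.mul_sub_one, mul_comm] using hdvd.mul_left x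

lemma gcd_pow_add_one_sq_sub_one (x : ℕ) {k : ℕ} (hk : Odd k) :
    gcd (x ^ k + 1) (x ^ 2 - 1) = x + 1 := by
  rw [((pow_modEq_self_of_odd x hk).add_right 1).gcd_eq, gcd_eq_left]
  exact ⟨x - 1, by simpa using sq_sub_sq x 1⟩

lemma pow_add_one_dvd_pow_two_mul_sub_one (q m : ℕ) : q ^ m + 1 ∣ q ^ (2 * m) - 1 :=
  ⟨q ^ m - 1, by simpa [pow_mul'] using sq_sub_sq (q ^ m) 1⟩

end Nat

theorem gcd_pow_add_one_pow_sub_one_general (q m j : ℕ) (hmodd : Odd m) :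
    Nat.gcd (q ^ m + 1) (q ^ (2 * j) - 1) = q ^ (Nat.gcd m j) + 1 := by
  set d := Nat.gcd m j
  obtain ⟨k, hk⟩ := Nat.gcd_dvd_left m j
  have hkodd : Odd k := (Nat.odd_mul.mp (hk ▸ hmodd)).2
  have key : Nat.gcd (q ^ m + 1) (q ^ (2 * d) - 1) = q ^ d + 1 := by
    rw [hk, pow_mul, mul_comm, pow_mul]
    exact Nat.gcd_pow_add_one_sq_sub_one _ hkodd
  rw [← key]
  apply Nat.dvd_antisymm
  · refine Nat.dvd_gcd (Nat.gcd_dvd_left _ _) ?_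
    rw [← Nat.gcd_mul_left, ← Nat.pow_sub_one_gcd_pow_sub_one]
    exact Nat.dvd_gcd ((Nat.gcd_dvd_left _ _).trans (Nat.pow_add_one_dvd_pow_two_mul_sub_one q m))
      (Nat.gcd_dvd_right _ _)
  · exact Nat.gcd_dvd_gcd_of_dvd_right _
      (Nat.pow_sub_one_dvd_pow_sub_one q (mul_dvd_mul_left 2 (Nat.gcd_dvd_right m j)))

/-- For `q ≥ 2`, `m ≥ 1` odd and `j ≥ 1`, with `d = gcd(m, j)`, one has
`gcd(q^m + 1, q^(2j) - 1) = q^d + 1`. -/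
theorem gcd_pow_add_one_pow_sub_one (q m j : ℕ) (hq : 2 ≤ q) (hm : 1 ≤ m) (hmodd : Odd m)
    (hj : 1 ≤ j) :
    Nat.gcd (q ^ m + 1) (q ^ (2 * j) - 1) = q ^ (Nat.gcd m j) + 1 :=
  gcd_pow_add_one_pow_sub_one_general q m j hmodd
end

section
/- Let K be an algebraically closed field of characteristic p, let q be a power of p, and let η ∈ K satisfy η^q + η = 0. Then the set {(x, z) ∈ K × K : z^q + z = x^(q+1), x^(q²) = x, z^(q²) = z + η} is finite with cardinality q³ if η = 0, and is empty if η ≠ 0. -/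
/-!
Since `q` is a power of the characteristic, `z ↦ z ^ q + z` is additive. Raising
`z ^ q + z = x ^ (q + 1)` to the `q`-th power and using `x ^ (q²) = x` gives
`z ^ (q²) + z ^ q = x ^ (q + 1) = z ^ q + z`, so every point of the curve with `x ∈ 𝔽_{q²}`
already satisfies `z ^ (q²) = z`; this forces `η = 0`. For `η = 0` the points are then counted
fibrewise over the `q²` roots of the separable polynomial `X ^ (q²) - X`, each fibre being the
`q` roots of the separable polynomial `X ^ q + X - c`.
-/

open Polynomial

theorem Set.ncard_setOf_fst_mem_snd_mem {α β : Type*} {s : Set α} {t : α → Set β} {n : ℕ}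
    (hs : s.Finite) (ht : ∀ a ∈ s, (t a).Finite) (htn : ∀ a ∈ s, (t a).ncard = n) :
    {p : α × β | p.1 ∈ s ∧ p.2 ∈ t p.1}.Finite ∧
      {p : α × β | p.1 ∈ s ∧ p.2 ∈ t p.1}.ncard = s.ncard * n := by
  have : Fintype s := hs.fintype
  have : ∀ a : s, Finite (t a) := fun a => (ht a a.2).to_subtype
  let e : {p : α × β | p.1 ∈ s ∧ p.2 ∈ t p.1} ≃ Σ a : s, t a :=
    { toFun := fun p => ⟨⟨p.1.1, p.2.1⟩, ⟨p.1.2, p.2.2⟩⟩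
      invFun := fun x => ⟨(x.1.1, x.2.1), x.1.2, x.2.2⟩
      left_inv := fun _ => rfl
      right_inv := fun _ => rfl }
  refine ⟨(hs.prod (hs.biUnion ht)).subset fun p hp => ⟨hp.1, Set.mem_biUnion hp.1 hp.2⟩, ?_⟩
  rw [← Nat.card_coe_set_eq, Nat.card_congr e, Nat.card_sigma, ← Nat.card_coe_set_eq s,
    Nat.card_eq_fintype_card, ← Finset.card_univ, ← smul_eq_mul, ← Finset.sum_const]
  exact Finset.sum_congr rfl fun a _ => by rw [Nat.card_coe_set_eq, htn a a.2]

section AlgClosed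

variable {K : Type*} [Field K] [IsAlgClosed K]

theorem Polynomial.Separable.ncard_setOf_isRoot {g : K[X]} (hg : g.Separable) :
    {x | g.IsRoot x}.ncard = g.natDegree := by
  classical
  have hset : {x | g.IsRoot x} = g.rootSet K := by
    ext x; simp [mem_rootSet, hg.ne_zero]
  rw [hset, Set.ncard_eq_toFinset_card', Set.toFinset_card,
    card_rootSet_eq_natDegree hg (by simpa using IsAlgClosed.splits g)]

theorem ncard_setOf_pow_eq_self {n : ℕ} (hn : (n : K) = 0) (h1 : 1 < n) :
    {x : K | x ^ n = x}.ncard = n := by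
  have hsep : (X ^ n - X : K[X]).Separable :=
    galois_poly_separable (ringChar K) n ((ringChar.spec K n).1 hn)
  have hdeg : (X ^ n - X : K[X]).natDegree = n := by
    rw [natDegree_sub_eq_left_of_natDegree_lt] <;> simp [h1]
  simpa [hdeg, sub_eq_zero] using hsep.ncard_setOf_isRoot

theorem ncard_setOf_pow_add_self_eq {n : ℕ} (hn : (n : K) = 0) (h1 : 1 < n) (c : K) :
    {z : K | z ^ n + z = c}.ncard = n := by
  have hsep : (X ^ n + X - C c : K[X]).Separable := by
    rw [Polynomial.Separable, show derivative (X ^ n + X - C c : K[X]) = 1 by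
      simp [derivative_X_pow, hn]]
    exact isCoprime_one_right
  have hdeg : (X ^ n + X - C c : K[X]).natDegree = n := by
    rw [natDegree_sub_C, natDegree_add_eq_left_of_natDegree_lt] <;> simp [h1]
  simpa [hdeg, sub_eq_zero] using hsep.ncard_setOf_isRoot

end AlgClosed

theorem pow_pow_two_eq_self_of_pow_add_self_eq {R : Type*} [CommRing R] {p f : ℕ} [ExpChar R p]
    {x z : R} (hz : z ^ p ^ f + z = x ^ (p ^ f + 1)) (hx : x ^ (p ^ f) ^ 2 = x) :
    z ^ (p ^ f) ^ 2 = z := by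
  have h := congrArg (· ^ p ^ f) hz
  simp only [add_pow_expChar_pow, ← pow_mul] at h
  have hx' : x ^ ((p ^ f + 1) * p ^ f) = x ^ (p ^ f + 1) := by
    rw [add_mul, one_mul, pow_add, ← sq, hx, pow_succ']
  rw [← sq, hx', ← hz] at h
  exact add_right_cancel (h.trans (add_comm _ _))

theorem card_fixed_points_hermitian_curve_general
    (p : ℕ) (hp : p.Prime) (K : Type*) [Field K] [IsAlgClosed K] [CharP K p]
    (f : ℕ) (hf : 1 ≤ f) (q : ℕ) (hq : q = p ^ f)
    (η : K) :
    (η = 0 →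
      ({xz : K × K | xz.2 ^ q + xz.2 = xz.1 ^ (q + 1) ∧ xz.1 ^ (q ^ 2) = xz.1 ∧
        xz.2 ^ (q ^ 2) = xz.2 + η}).Finite ∧
      ({xz : K × K | xz.2 ^ q + xz.2 = xz.1 ^ (q + 1) ∧ xz.1 ^ (q ^ 2) = xz.1 ∧
        xz.2 ^ (q ^ 2) = xz.2 + η}).ncard = q ^ 3) ∧
    (η ≠ 0 →
      {xz : K × K | xz.2 ^ q + xz.2 = xz.1 ^ (q + 1) ∧ xz.1 ^ (q ^ 2) = xz.1 ∧
        xz.2 ^ (q ^ 2) = xz.2 + η} = ∅) := by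
  subst hq
  have : ExpChar K p := ExpChar.prime hp
  have hq1 : 1 < p ^ f := Nat.one_lt_pow (by omega) hp.one_lt
  have hqK : ((p ^ f : ℕ) : K) = 0 := by
    rw [Nat.cast_pow, CharP.cast_eq_zero, zero_pow (by omega)]
  refine ⟨?_, ?_⟩
  · rintro rfl
    have hS : {xz : K × K | xz.2 ^ p ^ f + xz.2 = xz.1 ^ (p ^ f + 1) ∧
        xz.1 ^ (p ^ f) ^ 2 = xz.1 ∧ xz.2 ^ (p ^ f) ^ 2 = xz.2 + 0} =
        {xz : K × K | xz.1 ∈ {x : K | x ^ (p ^ f) ^ 2 = x} ∧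
          xz.2 ∈ {z : K | z ^ p ^ f + z = xz.1 ^ (p ^ f + 1)}} := by
      ext ⟨x, z⟩
      simp only [Set.mem_ofPred_eq, add_zero]
      exact ⟨fun ⟨hz, hx, _⟩ => ⟨hx, hz⟩,
        fun ⟨hx, hz⟩ => ⟨hz, hx, pow_pow_two_eq_self_of_pow_add_self_eq hz hx⟩⟩
    have hA : {x : K | x ^ (p ^ f) ^ 2 = x}.ncard = (p ^ f) ^ 2 :=
      ncard_setOf_pow_eq_self (by rw [Nat.cast_pow, hqK, zero_pow two_ne_zero]) (by nlinarith)
    have hB (c : K) : {z : K | z ^ p ^ f + z = c}.ncard = p ^ f :=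
      ncard_setOf_pow_add_self_eq hqK hq1 c
    obtain ⟨hfin, hcard⟩ := Set.ncard_setOf_fst_mem_snd_mem
      (t := fun x => {z : K | z ^ p ^ f + z = x ^ (p ^ f + 1)})
      (Set.finite_of_ncard_ne_zero (by rw [hA]; positivity))
      (fun _ _ => Set.finite_of_ncard_ne_zero (by rw [hB]; positivity)) (fun _ _ => hB _)
    rw [hS]
    exact ⟨hfin, by rw [hcard, hA]; ring⟩
  · intro hη
    ext ⟨x, z⟩
    simp only [Set.mem_ofPred_eq, Set.mem_empty_iff_false, iff_false]
    rintro ⟨hz, hx, hzη⟩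
    exact hη (by linear_combination pow_pow_two_eq_self_of_pow_add_self_eq hz hx - hzη)

/-- Point count for the fixed points of `(-η) ∘ Fr_{q²}` on the curve `z^q + z = x^(q+1)`
over an algebraically closed field of characteristic `p`: the solution set of
`z^q + z = x^(q+1)`, `x^(q²) = x`, `z^(q²) = z + η` has `q³` elements if `η = 0` and is
empty otherwise. -/
theorem card_fixed_points_hermitian_curve
    (p : ℕ) (hp : p.Prime) (K : Type*) [Field K] [IsAlgClosed K] [CharP K p]
    (f : ℕ) (hf : 1 ≤ f) (q : ℕ) (hq : q = p ^ f)
    (η : K) (hη : η ^ q + η = 0) :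
    (η = 0 →
      ({xz : K × K | xz.2 ^ q + xz.2 = xz.1 ^ (q + 1) ∧ xz.1 ^ (q ^ 2) = xz.1 ∧
        xz.2 ^ (q ^ 2) = xz.2 + η}).Finite ∧
      ({xz : K × K | xz.2 ^ q + xz.2 = xz.1 ^ (q + 1) ∧ xz.1 ^ (q ^ 2) = xz.1 ∧
        xz.2 ^ (q ^ 2) = xz.2 + η}).ncard = q ^ 3) ∧
    (η ≠ 0 →
      {xz : K × K | xz.2 ^ q + xz.2 = xz.1 ^ (q + 1) ∧ xz.1 ^ (q ^ 2) = xz.1 ∧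
        xz.2 ^ (q ^ 2) = xz.2 + η} = ∅) :=
  card_fixed_points_hermitian_curve_general p hp K f hf q hq η
end

section
/- Let K be a finite field with q² elements and let n be a natural number. Then the set {(v, a) ∈ (Fin n → K) × K : a^q + a = Σ_{i} (v i)^(q+1)} has exactly q^(2n+1) elements. -/
/-!
Write `q = p ^ k` with `p` the characteristic of `K`. The map `T a = a ^ q + a` is additive, and
since `x ^ (q * q) = x` on `K`, its values, the norms `x ^ (q + 1)` and their sums are all fixed
by `x ↦ x ^ q`. The kernel of `T` (roots of `X ^ q + X`) and the fixed points (roots of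
`X ^ q - X`) both have at most `q` elements, so `q ^ 2 = |im T| * |ker T|` forces `T` onto the
fixed points with all fibres of size `q`. Each of the `q ^ (2 * n)` vectors `v` therefore has
exactly `q` partners `a`.
-/

open Polynomial

namespace AddMonoidHom

variable {G H : Type*} [AddGroup G] [AddGroup H]

theorem card_fiber_eq_card_ker (f : G →+ H) {c : H} (hc : c ∈ f.range) :
    Nat.card {a // f a = c} = Nat.card f.ker := by
  obtain ⟨a₀, rfl⟩ := hc
  exact Nat.card_congr <| (Equiv.addLeft (-a₀)).subtypeEquiv fun a ↦ by
    rw [Equiv.coe_addLeft, mem_ker, map_add, map_neg, neg_add_eq_zero, eq_comm]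

theorem card_range_mul_card_ker (f : G →+ H) :
    Nat.card f.range * Nat.card f.ker = Nat.card G := by
  rw [← AddSubgroup.index_ker, mul_comm, AddSubgroup.card_mul_index]

theorem card_fiber_eq_of_range_subset [Finite G] [Finite H] (f : G →+ H) {S : Set H}
    (hS : (f.range : Set H) ⊆ S) {k m : ℕ} (hker : Nat.card f.ker ≤ k) (hSm : S.ncard ≤ m)
    (hG : Nat.card G = k * m) {c : H} (hc : c ∈ S) :
    Nat.card {a // f a = c} = k := by
  have hrange : Nat.card f.range ≤ m := (Nat.card_mono S.toFinite hS).trans hSm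
  have hprod : Nat.card f.range * Nat.card f.ker = k * m := f.card_range_mul_card_ker.trans hG
  have hpos : 0 < k * m := hG ▸ Nat.card_pos
  have hker_eq : Nat.card f.ker = k := by
    refine le_antisymm hker (Nat.le_of_mul_le_mul_right ?_ (Nat.pos_of_mul_pos_left hpos))
    calc k * m = Nat.card f.range * Nat.card f.ker := hprod.symm
      _ ≤ m * Nat.card f.ker := Nat.mul_le_mul_right _ hrange
      _ = Nat.card f.ker * m := mul_comm _ _
  have hrange_eq : (f.range : Set H) = S := by
    refine Set.eq_of_subset_of_ncard_le hS ?_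
    rw [← Nat.card_coe_set_eq]
    change S.ncard ≤ Nat.card f.range
    rw [hker_eq, mul_comm] at hprod
    rwa [Nat.eq_of_mul_eq_mul_left (Nat.pos_of_mul_pos_right hpos) hprod]
  rw [f.card_fiber_eq_card_ker (hrange_eq ▸ hc : c ∈ (f.range : Set H)), hker_eq]

end AddMonoidHom

theorem ncard_setOf_pow_add_mul_eq_zero_le {K : Type*} [Field K] {q : ℕ} (hq : 1 < q) (c : K) :
    {x : K | x ^ q + c * x = 0}.ncard ≤ q := by
  have hdeg : (X ^ q + C c * X : K[X]).natDegree = q := by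
    rw [natDegree_add_eq_left_of_natDegree_lt] <;> rw [natDegree_X_pow]
    exact (natDegree_C_mul_le c X).trans_lt (by rwa [natDegree_X])
  have hne : (X ^ q + C c * X : K[X]) ≠ 0 := by
    intro h; rw [h, natDegree_zero] at hdeg; omega
  have hset : {x : K | x ^ q + c * x = 0} = (X ^ q + C c * X : K[X]).rootSet K := by
    ext x; simp [mem_rootSet, hne]
  rw [hset]
  exact (ncard_rootSet_le _ K).trans hdeg.le

theorem pow_pow_eq_self_of_card_eq_sq {K : Type*} [GroupWithZero K] [Fintype K] {q : ℕ}
    (hK : Fintype.card K = q ^ 2) (x : K) : (x ^ q) ^ q = x := by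
  rw [← pow_mul, ← sq, ← hK, FiniteField.pow_card]

section UnitaryTrace

variable {K : Type*} [Field K] [Fintype K] {p k : ℕ} [ExpChar K p]

theorem pow_add_self_pow_eq (hK : Fintype.card K = (p ^ k) ^ 2) (a : K) :
    (a ^ p ^ k + a) ^ p ^ k = a ^ p ^ k + a := by
  rw [add_pow_expChar_pow, pow_pow_eq_self_of_card_eq_sq hK, add_comm]

theorem sum_pow_succ_pow_eq (hK : Fintype.card K = (p ^ k) ^ 2) {ι : Type*} (s : Finset ι)
    (v : ι → K) : (∑ i ∈ s, v i ^ (p ^ k + 1)) ^ p ^ k = ∑ i ∈ s, v i ^ (p ^ k + 1) := by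
  rw [← iterateFrobenius_def, map_sum]
  refine Finset.sum_congr rfl fun i _ ↦ ?_
  rw [iterateFrobenius_def, pow_succ, mul_pow, pow_pow_eq_self_of_card_eq_sq hK, mul_comm]

theorem card_pow_add_self_eq (hK : Fintype.card K = (p ^ k) ^ 2) {c : K} (hc : c ^ p ^ k = c) :
    Nat.card {a : K // a ^ p ^ k + a = c} = p ^ k := by
  have hq : 1 < p ^ k := by
    have := Fintype.one_lt_card (α := K)
    rw [hK] at this
    exact lt_of_pow_lt_pow_left₀ 2 (Nat.zero_le _) (by simpa using this)
  let T : K →+ K := (iterateFrobenius K p k).toAddMonoidHom + AddMonoidHom.id K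
  refine T.card_fiber_eq_of_range_subset (S := {x | x ^ p ^ k = x}) (m := p ^ k) ?_ ?_ ?_ ?_ hc
  · rintro _ ⟨a, rfl⟩
    exact pow_add_self_pow_eq hK a
  · rw [← SetLike.coe_sort_coe, Nat.card_coe_set_eq]
    convert ncard_setOf_pow_add_mul_eq_zero_le hq (1 : K) using 2
    ext x
    simp [T, iterateFrobenius_def]
  · convert ncard_setOf_pow_add_mul_eq_zero_le hq (-1 : K) using 2
    ext x
    simp [add_neg_eq_zero]
  · rw [Nat.card_eq_fintype_card, hK, sq]

end UnitaryTrace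

/-- The unitary Heisenberg group `H_n(q)`, i.e. the set of pairs `(v, a)` with
`a^q + a = Σ_i (v i)^(q+1)` over a field with `q²` elements, has `q^(2n+1)` elements. -/
theorem card_unitary_heisenberg
    (q : ℕ) (hq : IsPrimePow q)
    (K : Type*) [Field K] [Fintype K] (hK : Fintype.card K = q ^ 2)
    (n : ℕ) :
    Nat.card {va : (Fin n → K) × K | va.2 ^ q + va.2 = ∑ i, (va.1 i) ^ (q + 1)}
      = q ^ (2 * n + 1) := by
  obtain ⟨p, k, hp, -, rfl⟩ := hq
  have : Fact p.Prime := ⟨hp.nat_prime⟩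
  have : CharP K p := charP_of_card_eq_prime_pow (f := k * 2) (by rw [hK, pow_mul])
  refine (Nat.card_congr (Equiv.subtypeProdEquivSigmaSubtype fun (v : Fin n → K) a ↦
    a ^ p ^ k + a = ∑ i, v i ^ (p ^ k + 1))).trans ?_
  rw [Nat.card_sigma]
  simp_rw [card_pow_add_self_eq hK (sum_pow_succ_pow_eq hK _ _)]
  rw [Finset.sum_const, Finset.card_univ, Fintype.card_fun, Fintype.card_fin, hK, smul_eq_mul]
  ring
end

section
/- Let m be an odd positive integer, let K be a finite field with q² elements, and let L be a finite field extension of K with q^(2m) elements. Then the image under the field trace Tr_{L/K} : L → K of the set {x ∈ L : x^(q^m) + x = 0} equals the set {x ∈ K : x^q + x = 0}. -/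
/-!
Let `τ x = x ^ q ^ m` on `L`. Since `q` is a power of the characteristic, `τ` is a ring
endomorphism, and it commutes with `Tr_{L/K}` because the trace is the sum of the conjugates
`x ^ (q²) ^ i`. As `m` is odd and `K` has `q²` elements, `τ` acts on `K` as `y ↦ y ^ q`, so
`Tr(x) ^ q = Tr(x ^ q ^ m)`. Hence `Tr` maps `{x | τ x = -x}` into `{y | y ^ q = -y}`, and
`Tr(τ w - w) = Tr(w) ^ q - Tr(w)`. Surjectivity follows from that of the trace together with the
fact that `y ↦ y ^ q - y` maps `K` onto `{y | y ^ q = -y}`: its kernel and the target both have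
at most `q` elements, being root sets of polynomials of degree `q`, while `|K| = q²`.
-/

open Polynomial

namespace FiniteField

theorem one_lt_of_card_eq_pow {F : Type*} [Field F] [Fintype F] {q j : ℕ} (hj : j ≠ 0)
    (hF : Fintype.card F = q ^ j) : 1 < q :=
  (Nat.one_lt_pow_iff hj).1 (hF ▸ Fintype.one_lt_card)

theorem exists_ringHom_eq_pow_of_card_eq_pow {F : Type*} [Field F] [Fintype F] {q j : ℕ}
    (hj : j ≠ 0) (hF : Fintype.card F = q ^ j) : ∃ φ : F →+* F, ∀ x, φ x = x ^ q := by
  obtain ⟨p, hchar, n, hp, hcard⟩ := FiniteField.card' F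
  have : ExpChar F p := ExpChar.prime hp
  have hdvd : q ∣ p ^ (n : ℕ) := hcard ▸ hF ▸ dvd_pow_self q hj
  obtain ⟨k, -, rfl⟩ := (Nat.dvd_prime_pow hp).1 hdvd
  exact ⟨iterateFrobenius F p k, iterateFrobenius_def p k⟩

theorem ncard_setOf_pow_eq_mul_le {F : Type*} [Field F] {n : ℕ} (hn : 1 < n) (c : F) :
    {y : F | y ^ n = c * y}.ncard ≤ n := by
  set P : F[X] := X ^ n - C c * X
  have hdeg : P.natDegree = n := by
    rw [natDegree_sub_eq_left_of_natDegree_lt] <;> rw [natDegree_X_pow]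
    exact ((natDegree_C_mul_le c X).trans natDegree_X_le).trans_lt hn
  have hP : P ≠ 0 := fun h => by rw [h, natDegree_zero] at hdeg; omega
  calc {y : F | y ^ n = c * y}.ncard ≤ (P.rootSet F).ncard :=
        Set.ncard_le_ncard (fun y hy => by simp_all [P, mem_rootSet, sub_eq_zero])
          (P.rootSet_finite F)
    _ ≤ n := hdeg ▸ P.ncard_rootSet_le F

theorem range_pow_sub_self_eq {F : Type*} [Field F] [Fintype F] {q : ℕ}
    (hF : Fintype.card F = q ^ 2) :
    Set.range (fun y : F => y ^ q - y) = {z : F | z ^ q + z = 0} := by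
  obtain ⟨φ, hφ⟩ := exists_ringHom_eq_pow_of_card_eq_pow two_ne_zero hF
  have hq : 1 < q := one_lt_of_card_eq_pow two_ne_zero hF
  let f : F →+ F := φ.toAddMonoidHom - AddMonoidHom.id F
  have hf : ∀ y, f y = y ^ q - y := fun y => by simp [f, hφ]
  rw [← congrArg Set.range (funext hf)]
  have hsub : Set.range f ⊆ {z : F | z ^ q + z = 0} := by
    rintro _ ⟨y, rfl⟩
    have hy : (y ^ q) ^ q = y := by rw [← pow_mul, ← sq, ← hF, FiniteField.pow_card]
    show f y ^ q + f y = 0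
    rw [hf, ← hφ (y ^ q - y), map_sub, hφ, hφ, hy]
    ring
  have hker : Nat.card f.ker ≤ q := by
    have hker_eq : (f.ker : Set F) = {y | y ^ q = 1 * y} := by
      ext y; simp [hf, sub_eq_zero]
    rw [← SetLike.coe_sort_coe, Nat.card_coe_set_eq, hker_eq]
    exact ncard_setOf_pow_eq_mul_le hq 1
  have hrange : q * q ≤ Nat.card f.range * q := by
    calc q * q = Nat.card f.ker * Nat.card f.range := by
          rw [← AddSubgroup.index_ker, AddSubgroup.card_mul_index, Nat.card_eq_fintype_card,
            hF, sq]
      _ ≤ q * Nat.card f.range := Nat.mul_le_mul_right _ hker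
      _ = Nat.card f.range * q := mul_comm _ _
  refine Set.eq_of_subset_of_ncard_le hsub ?_
  calc {z : F | z ^ q + z = 0}.ncard ≤ q := by
        simpa [add_eq_zero_iff_eq_neg] using ncard_setOf_pow_eq_mul_le hq (-1 : F)
    _ ≤ Nat.card f.range := Nat.le_of_mul_le_mul_right hrange (by omega)
    _ = (Set.range f).ncard := by
        rw [← AddMonoidHom.coe_range, ← SetLike.coe_sort_coe, Nat.card_coe_set_eq]

theorem map_algebraMap_trace {K L : Type*} [Field K] [Field L] [Algebra K L] [Finite L]
    (φ : L →+* L) (x : L) :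
    φ (algebraMap K L (Algebra.trace K L x)) = algebraMap K L (Algebra.trace K L (φ x)) := by
  simp only [algebraMap_trace_eq_sum_pow, map_sum, map_pow]

theorem pow_pow_eq_pow_of_odd {K : Type*} [Field K] [Fintype K] {q m : ℕ}
    (hK : Fintype.card K = q ^ 2) (hm : Odd m) (y : K) : y ^ q ^ m = y ^ q := by
  obtain ⟨d, rfl⟩ := hm
  rw [pow_succ, pow_mul, pow_mul, ← hK, pow_card_pow]

theorem trace_pow_eq_trace_pow_pow_finrank {K L : Type*} [Field K] [Field L] [Algebra K L]
    [Fintype K] [Fintype L] {q : ℕ} (hK : Fintype.card K = q ^ 2)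
    (hodd : Odd (Module.finrank K L)) (x : L) :
    Algebra.trace K L x ^ q = Algebra.trace K L (x ^ q ^ Module.finrank K L) := by
  set m := Module.finrank K L
  have hL : Fintype.card L = (q ^ m) ^ 2 := by
    rw [Module.card_eq_pow_finrank (K := K), hK, ← pow_mul, ← pow_mul, mul_comm]
  obtain ⟨ψ, hψ⟩ := exists_ringHom_eq_pow_of_card_eq_pow two_ne_zero hL
  apply (algebraMap K L).injective
  rw [← pow_pow_eq_pow_of_odd hK hodd, map_pow, ← hψ, map_algebraMap_trace, hψ]

end FiniteField

theorem trace_image_antifixed_general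
    (q : ℕ) (m : ℕ) (hmodd : Odd m)
    (K L : Type*) [Field K] [Field L] [Algebra K L] [Fintype K] [Fintype L]
    (hK : Fintype.card K = q ^ 2) (hL : Fintype.card L = q ^ (2 * m)) :
    (fun x : L => Algebra.trace K L x) '' {x : L | x ^ (q ^ m) + x = 0}
      = {x : K | x ^ q + x = 0} := by
  have hm : Module.finrank K L = m := by
    rw [Module.card_eq_pow_finrank (K := K), hK, ← pow_mul] at hL
    have := Nat.pow_right_injective (FiniteField.one_lt_of_card_eq_pow two_ne_zero hK) hL
    omega
  subst hm
  have key := FiniteField.trace_pow_eq_trace_pow_pow_finrank (L := L) hK hmodd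
  obtain ⟨ψ, hψ⟩ := FiniteField.exists_ringHom_eq_pow_of_card_eq_pow two_ne_zero
    (hL.trans (by rw [mul_comm, pow_mul]))
  ext z
  constructor
  · rintro ⟨x, hx, rfl⟩
    show Algebra.trace K L x ^ q + Algebra.trace K L x = 0
    rw [key, ← map_add, hx, map_zero]
  · intro hz
    obtain ⟨y, rfl⟩ := (FiniteField.range_pow_sub_self_eq hK).symm ▸ hz
    obtain ⟨w, rfl⟩ := Algebra.trace_surjective K L y
    refine ⟨ψ w - w, ?_, ?_⟩
    · have hw : ψ (ψ w) = w := by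
        rw [hψ, hψ, ← pow_mul, ← sq, ← pow_mul, mul_comm, ← hL, FiniteField.pow_card]
      show (ψ w - w) ^ q ^ _ + (ψ w - w) = 0
      rw [← hψ, map_sub, hw]
      ring
    · show Algebra.trace K L (ψ w - w) = Algebra.trace K L w ^ q - Algebra.trace K L w
      rw [map_sub, hψ, ← key]

/-- For odd `m`, the trace map of the extension `L/K` of finite fields with
`|K| = q²`, `|L| = q^(2m)` maps `{x ∈ L : x^(q^m) + x = 0}` onto `{x ∈ K : x^q + x = 0}`. -/
theorem trace_image_antifixed
    (q : ℕ) (hq : IsPrimePow q) (m : ℕ) (hm : 1 ≤ m) (hmodd : Odd m)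
    (K L : Type*) [Field K] [Field L] [Algebra K L] [Fintype K] [Fintype L]
    (hK : Fintype.card K = q ^ 2) (hL : Fintype.card L = q ^ (2 * m)) :
    (fun x : L => Algebra.trace K L x) '' {x : L | x ^ (q ^ m) + x = 0}
      = {x : K | x ^ q + x = 0} :=
  trace_image_antifixed_general q m hmodd K L hK hL
end

section
/- Let K be a field of characteristic p, let Q be a power of p, and let n ≥ 1. Suppose x : Fin n → K and z ∈ K satisfy z^Q + z = Σ_i (x i)^(Q+1). Suppose v : Fin n → K satisfies (v i)^(Q²) = v i for all i, and a ∈ K satisfies a^Q + a = Σ_i (v i)^(Q+1). Set z' = z + a + Σ_i (v i)^Q · (x i). Then z'^Q + z' = Σ_i (x i + v i)^(Q+1). -/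
/-- The unitary Heisenberg group acts on the points of the variety
`z^Q + z = Σ_i x_i^(Q+1)`: if `(x, z)` is a point, `(v, a)` satisfies
`(v i)^(Q²) = v i` and `a^Q + a = Σ_i (v i)^(Q+1)`, and
`z' = z + a + Σ_i (v i)^Q · x i`, then `z'^Q + z' = Σ_i (x i + v i)^(Q+1)`. -/
theorem heisenberg_action_on_variety
    (p : ℕ) (hp : p.Prime) (K : Type*) [Field K] [CharP K p]
    (e : ℕ) (he : 1 ≤ e) (Q : ℕ) (hQ : Q = p ^ e)
    (n : ℕ) (hn : 1 ≤ n)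
    (x : Fin n → K) (z : K) (hxz : z ^ Q + z = ∑ i, (x i) ^ (Q + 1))
    (v : Fin n → K) (hv : ∀ i, (v i) ^ (Q ^ 2) = v i)
    (a : K) (ha : a ^ Q + a = ∑ i, (v i) ^ (Q + 1)) :
    (z + a + ∑ i, (v i) ^ Q * x i) ^ Q + (z + a + ∑ i, (v i) ^ Q * x i)
      = ∑ i, (x i + v i) ^ (Q + 1) := by
  haveI : Fact p.Prime := ⟨hp⟩
  haveI : ExpChar K p := ExpChar.prime hp
  have hfrob : ∀ u w : K, (u + w) ^ Q = u ^ Q + w ^ Q := by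
    intro u w
    rw [hQ]
    exact add_pow_char_pow u w p e
  have hsum : (∑ i, (v i) ^ Q * x i) ^ Q = ∑ i, v i * (x i) ^ Q := by
    subst hQ
    have := map_sum (iterateFrobenius K p e) (fun i => (v i) ^ p ^ e * x i) Finset.univ
    simp only [iterateFrobenius_def, map_mul] at this
    rw [this]
    refine Finset.sum_congr rfl fun i _ => ?_
    rw [← pow_mul, ← pow_two, hv]
  have hrhs : ∀ i : Fin n, (x i + v i) ^ (Q + 1)
      = (x i) ^ (Q + 1) + v i * (x i) ^ Q + (v i) ^ Q * x i + (v i) ^ (Q + 1) := by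
    intro i
    rw [pow_succ, hfrob]
    ring
  rw [hfrob, hfrob, hsum]
  simp only [hrhs, Finset.sum_add_distrib]
  rw [← hxz, ← ha]
  ring
end

section
/- Let K be a field of characteristic p, let q be a power of p, and let m be an odd positive integer. Suppose x, z ∈ K satisfy z^(q^m) + z = x^(q^m + 1). Set w = Σ_{i=0}^{m−1} (−1)^i · z^(q^i). Then w^q + w = x^(q^m + 1). (That is, the map (x, z) ↦ (x, Σ_{i=0}^{m−1} (−1)^i z^(q^i)) sends points of the curve z^(q^m) + z = x^(q^m+1) to points of the curve w^q + w = x^(q^m+1).) -/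
/-!
Write `φ` for the `q`-power Frobenius, a ring endomorphism of `K` in characteristic `p`, so that
`w = Σ_{i<m} (-1)^i φ^i z`. Applying `φ` shifts every term of `w` one step and flips its sign,
so `φ w + w` telescopes to `z - (-1)^m φ^m z`, which for odd `m` is `z^(q^m) + z`.
-/

open Finset

theorem RingHom.map_alternating_sum_iterate_add {R : Type*} [Ring R] (φ : R →+* R) (z : R)
    (m : ℕ) :
    φ (∑ i ∈ Finset.range m, (-1) ^ i * φ^[i] z) + ∑ i ∈ Finset.range m, (-1) ^ i * φ^[i] z
      = z - (-1) ^ m * φ^[m] z := by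
  set g : ℕ → R := fun i => (-1) ^ i * φ^[i] z
  have shift (i : ℕ) : φ (g i) = -g (i + 1) := by
    simp only [g, map_mul, map_pow, map_neg, map_one, Function.iterate_succ_apply', pow_succ]
    rw [mul_neg_one, neg_mul, neg_neg]
  calc φ (∑ i ∈ Finset.range m, g i) + ∑ i ∈ Finset.range m, g i
      = ∑ i ∈ Finset.range m, (g i - g (i + 1)) := by
        rw [map_sum, ← sum_add_distrib]
        exact sum_congr rfl fun i _ => by rw [shift]; abel
    _ = g 0 - g m := sum_range_sub' g m
    _ = z - (-1) ^ m * φ^[m] z := by simp [g]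

theorem iterate_iterateFrobenius_apply {R : Type*} [CommSemiring R] (p : ℕ) [ExpChar R p]
    (f i : ℕ) (x : R) : (iterateFrobenius R p f)^[i] x = x ^ (p ^ f) ^ i := by
  rw [← iterateFrobenius_mul_apply, iterateFrobenius_def, pow_mul]

theorem curve_morphism_trace_like_general
    (p : ℕ) (hp : p.Prime) (K : Type*) [Field K] [CharP K p]
    (f : ℕ) (q : ℕ) (hq : q = p ^ f)
    (m : ℕ) (hmodd : Odd m)
    (x z : K) (hxz : z ^ (q ^ m) + z = x ^ (q ^ m + 1)) :
    (∑ i ∈ Finset.range m, (-1 : K) ^ i * z ^ (q ^ i)) ^ q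
        + ∑ i ∈ Finset.range m, (-1 : K) ^ i * z ^ (q ^ i)
      = x ^ (q ^ m + 1) := by
  have : Fact p.Prime := ⟨hp⟩
  have key := (iterateFrobenius K p f).map_alternating_sum_iterate_add z m
  simp only [iterate_iterateFrobenius_apply, iterateFrobenius_def, ← hq,
    hmodd.neg_one_pow] at key
  rw [key, ← hxz]
  ring

/-- The map `(x, z) ↦ (x, Σ_{i=0}^{m-1} (-1)^i z^(q^i))` sends points of the curve
`z^(q^m) + z = x^(q^m + 1)` to points of the curve `w^q + w = x^(q^m + 1)`
(for `m` odd). -/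
theorem curve_morphism_trace_like
    (p : ℕ) (hp : p.Prime) (K : Type*) [Field K] [CharP K p]
    (f : ℕ) (hf : 1 ≤ f) (q : ℕ) (hq : q = p ^ f)
    (m : ℕ) (hm : 1 ≤ m) (hmodd : Odd m)
    (x z : K) (hxz : z ^ (q ^ m) + z = x ^ (q ^ m + 1)) :
    (∑ i ∈ Finset.range m, (-1 : K) ^ i * z ^ (q ^ i)) ^ q
        + ∑ i ∈ Finset.range m, (-1 : K) ^ i * z ^ (q ^ i)
      = x ^ (q ^ m + 1) :=
  curve_morphism_trace_like_general p hp K f q hq m hmodd x z hxz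
end
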